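/- arXiv:math/0412390 — 16 statements merged into one kernel-verified Lean document; each statement's English description precedes it below -/
import Mathlib

section
/- Let K be an abelian group, Q a C-loop, f : Q × Q → K a map, and θ : Q → Aut(K) a homomorphism. The loop D = K ×_θ^f Q with multiplication (a,x)*(b,y) = (a·θ_x(b)·f(x,y), xy) is a C-loop with neutral element (1,1) if and only if (θ,f) is a C-factor set, i.e., f(x,1)=1=f(1,x) and θ_{xy}f(y,z)·θ_x f(y,yz)·f(x,y·yz) = f(x,y)·f(xy,y)·f(xy·y,z) for all x,y,z ∈ Q. -/
/-- A loop: a magma with two-sided identity and bijective left/right translations. -/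
class MulLoop (L : Type*) extends Mul L, One L where
  one_mul : ∀ x : L, 1 * x = x
  mul_one : ∀ x : L, x * 1 = x
  mulLeft_bijective : ∀ a : L, Function.Bijective fun x : L => a * x
  mulRight_bijective : ∀ a : L, Function.Bijective fun x : L => x * a

/-- A C-loop: a loop satisfying `x(y·yz) = (xy·y)z`.  C-loops are inverse property
loops, so we include the two-sided inverse. -/
class CLoop (L : Type*) extends MulLoop L, Inv L where
  mul_inv : ∀ x : L, x * x⁻¹ = 1
  inv_mul : ∀ x : L, x⁻¹ * x = 1
  c_law : ∀ x y z : L, x * (y * (y * z)) = ((x * y) * y) * z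

/-- The extension `K ×_θ^f Q` with multiplication (1,1) is a C-loop iff `(θ,f)` is a
C-factor set. -/
theorem stmt0 {K : Type} [CommGroup K] {Q : Type} [CLoop Q]
    (θ : Q → MulAut K) (hθ : ∀ x y : Q, θ (x * y) = θ x * θ y)
    (f : Q → Q → K)
    (m : K × Q → K × Q → K × Q)
    (hm : ∀ p q : K × Q, m p q = (p.1 * θ p.2 q.1 * f p.2 q.2, p.2 * q.2)) :
    ((∀ p : K × Q, m (1, 1) p = p ∧ m p (1, 1) = p) ∧
     (∀ p : K × Q, Function.Bijective (m p) ∧ Function.Bijective fun q => m q p) ∧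
     (∀ u v w : K × Q, m u (m v (m v w)) = m (m (m u v) v) w))
    ↔
    ((∀ x : Q, f x 1 = 1 ∧ f 1 x = 1) ∧
     (∀ x y z : Q,
        θ (x * y) (f y z) * θ x (f y (y * z)) * f x (y * (y * z)) =
          f x y * f (x * y) y * f ((x * y) * y) z)) := by
  have hθ1 : θ 1 = 1 := by
    have h := hθ 1 1
    rw [MulLoop.one_mul (1 : Q)] at h
    have := mul_right_cancel (a := θ 1) (b := θ 1) (c := 1)
    calc θ 1 = θ 1 * θ 1 * (θ 1)⁻¹ := by group
    _ = θ 1 * (θ 1)⁻¹ := by rw [← h]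
    _ = 1 := mul_inv_cancel _
  have key : ∀ (x y : Q) (k : K), θ x (θ y k) = θ (x * y) k := by
    intro x y k; rw [hθ]; rfl
  constructor
  · rintro ⟨hid, -, hc⟩
    constructor
    · intro x
      constructor
      · have h := (hid ((1 : K), x)).2
        rw [hm] at h
        have h1 := congrArg Prod.fst h
        simpa using h1
      · have h := (hid ((1 : K), x)).1
        rw [hm] at h
        have h1 := congrArg Prod.fst h
        simpa [hθ1] using h1
    · intro x y z
      have h := hc ((1 : K), x) ((1 : K), y) ((1 : K), z)
      simp only [hm] at h
      have h1 := congrArg Prod.fst h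
      simp only [map_one, one_mul, mul_one, map_mul, key] at h1
      simpa [mul_assoc] using h1
  · rintro ⟨h1, h2⟩
    have hf1 : ∀ x : Q, f x 1 = 1 := fun x => (h1 x).1
    have hf2 : ∀ x : Q, f 1 x = 1 := fun x => (h1 x).2
    refine ⟨?_, ?_, ?_⟩
    · intro p
      constructor
      · rw [hm]
        simp [hθ1, hf2, MulLoop.one_mul]
      · rw [hm]
        simp [hf1, MulLoop.mul_one]
    · intro p
      constructor
      · -- left translation bijective
        set eL : Q ≃ Q := Equiv.ofBijective _ (MulLoop.mulLeft_bijective p.2) with heL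
        have heLa : ∀ y : Q, eL y = p.2 * y := fun y => rfl
        refine Function.bijective_iff_has_inverse.2
          ⟨fun q => ((θ p.2).symm ((p.1 * f p.2 (eL.symm q.2))⁻¹ * q.1), eL.symm q.2), ?_, ?_⟩
        · intro q
          have h2' : eL.symm (p.2 * q.2) = q.2 := by
            rw [← heLa]; exact eL.symm_apply_apply q.2
          rw [hm]
          simp only [h2']
          refine Prod.ext ?_ rfl
          simp only []
          rw [mul_right_comm, inv_mul_cancel_left]
          exact (θ p.2).symm_apply_apply q.1
        · intro q
          rw [hm]
          simp only [MulEquiv.apply_symm_apply]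
          refine Prod.ext ?_ ?_
          · simp only []
            rw [mul_inv_rev]
            simp [mul_comm, mul_assoc, mul_left_comm]
          · show p.2 * eL.symm q.2 = q.2
            rw [← heLa]; exact eL.apply_symm_apply q.2
      · -- right translation bijective
        set eR : Q ≃ Q := Equiv.ofBijective _ (MulLoop.mulRight_bijective p.2) with heR
        have heRa : ∀ y : Q, eR y = y * p.2 := fun y => rfl
        refine Function.bijective_iff_has_inverse.2
          ⟨fun q => (q.1 * (θ (eR.symm q.2) p.1 * f (eR.symm q.2) p.2)⁻¹, eR.symm q.2), ?_, ?_⟩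
        · intro q
          have h2' : eR.symm (q.2 * p.2) = q.2 := by
            rw [← heRa]; exact eR.symm_apply_apply q.2
          simp only [hm, h2']
          refine Prod.ext ?_ rfl
          simp [mul_assoc]
        · intro q
          simp only [hm]
          refine Prod.ext ?_ ?_
          · simp [mul_assoc]
          · show eR.symm q.2 * p.2 = q.2
            rw [← heRa]; exact eR.apply_symm_apply q.2
    · intro u v w
      obtain ⟨a, x⟩ := u
      obtain ⟨b, y⟩ := v
      obtain ⟨c, z⟩ := w
      have hassoc : x * (y * y) = (x * y) * y := by
        have := CLoop.c_law x y (1 : Q)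
        rwa [MulLoop.mul_one, MulLoop.mul_one] at this
      simp only [hm]
      refine Prod.ext ?_ (CLoop.c_law x y z)
      simp only [map_mul, key, hassoc]
      have H := h2 x y z
      trans ((a * θ x b * θ (x * y) b * θ ((x * y) * y) c) *
              (θ (x * y) (f y z) * θ x (f y (y * z)) * f x (y * (y * z))))
      · simp [mul_comm, mul_assoc, mul_left_comm]
      rw [H]
      simp [mul_comm, mul_assoc, mul_left_comm]
end

section
/- Let D = K ×_θ^f Q be the C-loop built from an abelian group K, a C-loop Q, and a C-factor set (θ,f). Then the subset K × {1} is contained in the nucleus of D. -/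
/-- The nucleus of a magma with multiplication `m`: elements associating with all
pairs in all three positions. -/
def mnucleus {L : Type*} (m : L → L → L) : Set L :=
  {a | ∀ x y : L, m (m a x) y = m a (m x y) ∧ m (m x a) y = m x (m a y) ∧
        m (m x y) a = m x (m y a)}

/-- The center: nuclear elements commuting with everything. -/
def mcenter {L : Type*} (m : L → L → L) : Set L :=
  {a ∈ mnucleus m | ∀ x : L, m a x = m x a}


/-- In the C-loop extension `K ×_θ^f Q` built from a C-factor set, the subset
`K × {1}` lies in the nucleus. -/
theorem stmt1 {K : Type} [CommGroup K] {Q : Type} [CLoop Q]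
    (θ : Q → MulAut K) (hθ : ∀ x y : Q, θ (x * y) = θ x * θ y)
    (f : Q → Q → K)
    (hf1 : ∀ x : Q, f x 1 = 1 ∧ f 1 x = 1)
    (hf2 : ∀ x y z : Q,
        θ (x * y) (f y z) * θ x (f y (y * z)) * f x (y * (y * z)) =
          f x y * f (x * y) y * f ((x * y) * y) z)
    (m : K × Q → K × Q → K × Q)
    (hm : ∀ p q : K × Q, m p q = (p.1 * θ p.2 q.1 * f p.2 q.2, p.2 * q.2)) :
    ∀ a : K, ((a, 1) : K × Q) ∈ mnucleus m := by
  intro a x y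
  have h1 : ∀ q : Q, (1 : Q) * q = q := MulLoop.one_mul
  have h2 : ∀ q : Q, q * (1 : Q) = q := MulLoop.mul_one
  have hθ1 : θ 1 = 1 := by
    have := hθ 1 1
    rw [h1] at this
    exact mul_left_cancel (a := θ 1) (by rw [← this, mul_one])
  have hθm : ∀ x y : Q, ∀ k : K, θ (x * y) k = θ x (θ y k) := by
    intro x y k; rw [hθ]; rfl
  refine ⟨?_, ?_, ?_⟩ <;>
    simp only [hm, hθ1, (hf1 _).1, (hf1 _).2, h1, h2, MulAut.one_apply, map_mul, hθm,
      Prod.mk.injEq, mul_one, one_mul, and_true] <;>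
    simp only [mul_assoc, mul_comm, mul_left_comm]
end

section
/- Let Q be a loop with a normal subloop K contained in the nucleus N(Q). For each x ∈ Q define θ_x = T_x restricted to K, where T_x(a) is the unique element with T_x(a)·x = x·a. Then each θ_x is an automorphism of K, and the map x ↦ θ_x satisfies θ_{xy} = θ_x ∘ θ_y for all x,y ∈ Q. -/
/-- The nucleus of a magma: elements associating with all pairs in all three
positions. -/
def nucleus (L : Type*) [Mul L] : Set L :=
  {a | ∀ x y : L, a * x * y = a * (x * y) ∧ x * a * y = x * (a * y) ∧
        x * y * a = x * (y * a)}

/-- Leong's lemma: if `K` is a normal subloop of a loop `Q` contained in the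
nucleus, then each middle inner mapping `θ_x = T_x|_K` is an automorphism of `K`,
and `θ_{xy} = θ_x ∘ θ_y`.  Here `rD`/`lD` are the right/left division operations,
`T x a = (x*a)/x` is the middle inner mapping, and normality of `K` is invariance
under the standard generators of the inner mapping group. -/
theorem stmt3 {Q : Type} [MulLoop Q]
    (rD : Q → Q → Q) (hrD : ∀ a b : Q, rD a b * b = a)
    (lD : Q → Q → Q) (hlD : ∀ a b : Q, a * lD a b = b)
    (T : Q → Q → Q) (hT : ∀ x a : Q, T x a = rD (x * a) x)
    (K : Set Q)
    (hone : (1 : Q) ∈ K)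
    (hmul : ∀ a ∈ K, ∀ b ∈ K, a * b ∈ K)
    (hdiv : ∀ a ∈ K, ∀ b ∈ K, rD a b ∈ K ∧ lD a b ∈ K)
    (hnuc : K ⊆ nucleus Q)
    (hnormal : ∀ x y : Q,
        (fun a => T x a) '' K = K ∧
        (fun a => lD (y * x) (y * (x * a))) '' K = K ∧
        (fun a => rD ((a * x) * y) (x * y)) '' K = K) :
    (∀ x : Q, Set.BijOn (T x) K K ∧
        ∀ a ∈ K, ∀ b ∈ K, T x (a * b) = T x a * T x b) ∧
    (∀ x y : Q, ∀ a ∈ K, T (x * y) a = T x (T y a)) := by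
  have Tspec : ∀ x a : Q, T x a * x = x * a := by
    intro x a; rw [hT]; exact hrD _ _
  have rinj : ∀ x : Q, Function.Injective fun z : Q => z * x := fun x =>
    (MulLoop.mulRight_bijective x).injective
  have hmem : ∀ x : Q, ∀ a ∈ K, T x a ∈ K := by
    intro x a ha
    have h := (hnormal x x).1
    rw [← h]
    exact ⟨a, ha, rfl⟩
  have hsurj : ∀ x : Q, Set.SurjOn (T x) K K := by
    intro x
    have h := (hnormal x x).1
    intro b hb
    rw [← h] at hb
    exact hb
  constructor
  · intro x
    refine ⟨⟨fun a ha => hmem x a ha, fun a _ b _ hab => ?_, hsurj x⟩, ?_⟩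
    · have : x * a = x * b := by
        rw [← Tspec x a, ← Tspec x b, hab]
      exact (MulLoop.mulLeft_bijective x).injective this
    · intro a ha b hb
      apply rinj x
      show T x (a * b) * x = (T x a * T x b) * x
      have hbn := hnuc hb
      have han := hnuc ha
      have hTbn := hnuc (hmem x b hb)
      calc T x (a * b) * x = x * (a * b) := Tspec x (a * b)
        _ = x * a * b := ((han x b).2.1).symm
        _ = T x a * x * b := by rw [Tspec x a]
        _ = T x a * (x * b) := (hbn (T x a) x).2.2
        _ = T x a * (T x b * x) := by rw [Tspec x b]
        _ = T x a * T x b * x := ((hTbn (T x a) x).2.1).symm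
  · intro x y a ha
    apply rinj (x * y)
    show T (x * y) a * (x * y) = T x (T y a) * (x * y)
    have han := hnuc ha
    have hTya := hnuc (hmem y a ha)
    have hTxTya := hnuc (hmem x _ (hmem y a ha))
    calc T (x * y) a * (x * y) = (x * y) * a := Tspec _ _
      _ = x * (y * a) := (han x y).2.2
      _ = x * (T y a * y) := by rw [Tspec y a]
      _ = x * T y a * y := ((hTya x y).2.1).symm
      _ = (T x (T y a) * x) * y := by rw [Tspec x (T y a)]
      _ = T x (T y a) * (x * y) := (hTxTya x y).1
end

section
/- Let K be an abelian group, Q a C-loop, (θ,f) a C-factor set, and C = K ×_θ^f Q. Then K × {1} is contained in the center Z(C) if and only if θ_x = id_K for every x ∈ Q. -/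
/-- The multiplication of the extension `K ×_θ^f Q`. -/
def factorMul {K Q : Type*} [Group K] [Mul Q] (θ : Q → MulAut K) (f : Q → Q → K)
    (p q : K × Q) : K × Q :=
  (p.1 * θ p.2 q.1 * f p.2 q.2, p.2 * q.2)

section Forward

variable {K Q : Type*} [Group K] [Mul Q] [One Q] {θ : Q → MulAut K} {f : Q → Q → K}

theorem apply_eq_of_factorMul_comm (hf1 : ∀ x : Q, f x 1 = 1 ∧ f 1 x = 1) {a : K} {x : Q}
    (h : factorMul θ f (a, 1) (1, x) = factorMul θ f (1, x) (a, 1)) : θ x a = a := by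
  have h₁ := congrArg Prod.fst h
  simp only [factorMul, map_one, (hf1 x).1, (hf1 x).2, mul_one, one_mul] at h₁
  exact h₁.symm

end Forward

section Backward

variable {K Q : Type*} [CommGroup K] [MulLoop Q] {θ : Q → MulAut K} {f : Q → Q → K}

theorem factorMul_mul_fst_left (a : K) (p q : K × Q) :
    factorMul θ f (a * p.1, p.2) q =
      (a * (factorMul θ f p q).1, (factorMul θ f p q).2) := by
  simp only [factorMul, mul_assoc]

variable (hθ : ∀ x : Q, θ x = MulEquiv.refl K)
include hθ

theorem factorMul_mul_fst_right (a : K) (p q : K × Q) :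
    factorMul θ f p (a * q.1, q.2) =
      (a * (factorMul θ f p q).1, (factorMul θ f p q).2) := by
  simp only [factorMul, hθ, MulEquiv.refl_apply]
  exact Prod.ext (by ac_rfl) rfl

variable (hf1 : ∀ x : Q, f x 1 = 1 ∧ f 1 x = 1)
include hf1

theorem factorMul_mk_one_left (a : K) (p : K × Q) :
    factorMul θ f (a, 1) p = (a * p.1, p.2) := by
  simp only [factorMul, hθ, MulEquiv.refl_apply, (hf1 _).2, mul_one, MulLoop.one_mul]

theorem factorMul_mk_one_right (a : K) (p : K × Q) :
    factorMul θ f p (a, 1) = (a * p.1, p.2) := by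
  simp only [factorMul, hθ, MulEquiv.refl_apply, (hf1 _).1, mul_one, MulLoop.mul_one]
  exact Prod.ext (mul_comm _ _) rfl

theorem mk_one_mem_mcenter_factorMul (a : K) : ((a, 1) : K × Q) ∈ mcenter (factorMul θ f) := by
  refine ⟨fun x y => ⟨?_, ?_, ?_⟩, fun x => ?_⟩ <;>
    simp only [factorMul_mk_one_left hθ hf1, factorMul_mk_one_right hθ hf1,
      factorMul_mul_fst_left, factorMul_mul_fst_right hθ]

end Backward

theorem stmt4_general {K : Type} [CommGroup K] {Q : Type} [CLoop Q]
    (θ : Q → MulAut K)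
    (f : Q → Q → K)
    (hf1 : ∀ x : Q, f x 1 = 1 ∧ f 1 x = 1)
    (m : K × Q → K × Q → K × Q)
    (hm : ∀ p q : K × Q, m p q = (p.1 * θ p.2 q.1 * f p.2 q.2, p.2 * q.2)) :
    (∀ a : K, ((a, 1) : K × Q) ∈ mcenter m) ↔ ∀ x : Q, θ x = MulEquiv.refl K := by
  obtain rfl : m = factorMul θ f := funext₂ hm
  refine ⟨fun h x => ?_, fun hθ a => mk_one_mem_mcenter_factorMul hθ hf1 a⟩
  ext a
  exact apply_eq_of_factorMul_comm hf1 ((h a).2 (1, x))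

/-- In the C-loop extension `C = K ×_θ^f Q` built from a C-factor set, `K × {1}`
lies in the center of `C` iff `θ_x = id` for every `x`. -/
theorem stmt4 {K : Type} [CommGroup K] {Q : Type} [CLoop Q]
    (θ : Q → MulAut K) (hθ : ∀ x y : Q, θ (x * y) = θ x * θ y)
    (f : Q → Q → K)
    (hf1 : ∀ x : Q, f x 1 = 1 ∧ f 1 x = 1)
    (hf2 : ∀ x y z : Q,
        θ (x * y) (f y z) * θ x (f y (y * z)) * f x (y * (y * z)) =
          f x y * f (x * y) y * f ((x * y) * y) z)
    (m : K × Q → K × Q → K × Q)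
    (hm : ∀ p q : K × Q, m p q = (p.1 * θ p.2 q.1 * f p.2 q.2, p.2 * q.2)) :
    (∀ a : K, ((a, 1) : K × Q) ∈ mcenter m) ↔ ∀ x : Q, θ x = MulEquiv.refl K :=
  stmt4_general θ f hf1 m hm
end

section
/- Let L be a C-loop. The quotient L/Z(L) is a Steiner loop if and only if every square x² (x ∈ L) lies in the center Z(L). -/
/-- A Steiner loop: a commutative inverse property loop of exponent 2. -/
class SteinerLoop (L : Type*) extends MulLoop L where
  comm : ∀ x y : L, x * y = y * x
  sq : ∀ x : L, x * x = 1
  cancel : ∀ x y : L, x * (x * y) = y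

/-- The center: nuclear elements commuting with everything. -/
def loopCenter (L : Type*) [Mul L] : Set L :=
  {a ∈ nucleus L | ∀ x : L, a * x = x * a}

namespace Stmt5Aux

variable {L : Type} [CLoop L]

lemma mul_left_cancel {a x y : L} (h : a * x = a * y) : x = y :=
  (MulLoop.mulLeft_bijective a).1 h

lemma mul_right_cancel {a x y : L} (h : x * a = y * a) : x = y :=
  (MulLoop.mulRight_bijective a).1 h

lemma lc (x y : L) : x * (x * y) = (x * x) * y := by
  have h := CLoop.c_law (1 : L) x y
  simpa [MulLoop.one_mul] using h

lemma rc (x y : L) : (x * y) * y = x * (y * y) := by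
  have h := CLoop.c_law x y (1 : L)
  simpa [MulLoop.mul_one] using h.symm

lemma nuc_left {a : L} (h : a ∈ nucleus L) (x y : L) : a * x * y = a * (x * y) := (h x y).1
lemma nuc_mid {a : L} (h : a ∈ nucleus L) (x y : L) : x * a * y = x * (a * y) := (h x y).2.1
lemma nuc_right {a : L} (h : a ∈ nucleus L) (x y : L) : x * y * a = x * (y * a) := (h x y).2.2

lemma center_nuc {a : L} (h : a ∈ loopCenter L) : a ∈ nucleus L := h.1
lemma center_comm {a : L} (h : a ∈ loopCenter L) (x : L) : a * x = x * a := h.2 x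

lemma one_center : (1 : L) ∈ loopCenter L := by
  constructor
  · intro x y
    refine ⟨?_, ?_, ?_⟩ <;> simp [MulLoop.one_mul, MulLoop.mul_one]
  · intro x; simp [MulLoop.one_mul, MulLoop.mul_one]

lemma center_mul {a b : L} (ha : a ∈ loopCenter L) (hb : b ∈ loopCenter L) :
    a * b ∈ loopCenter L := by
  obtain ⟨hna, hca⟩ := ha
  obtain ⟨hnb, hcb⟩ := hb
  have hn : a * b ∈ nucleus L := by
    intro x y
    refine ⟨?_, ?_, ?_⟩
    · rw [nuc_left hna b x, nuc_left hna (b*x) y, nuc_left hnb x y, ← nuc_left hna b (x*y)]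
    · rw [← nuc_mid hna x b, nuc_mid hnb (x*a) y, nuc_mid hna x (b*y), nuc_left hna b y]
    · rw [← nuc_mid hna (x*y) b, nuc_right hna x y, nuc_right hnb x (y*a), nuc_mid hna y b]
  refine ⟨hn, fun x => ?_⟩
  rw [nuc_left hna b x, hcb x, ← nuc_left hna x b, hca x, nuc_mid hna x b]

lemma center_inv {a : L} (ha : a ∈ loopCenter L) : a⁻¹ ∈ loopCenter L := by
  obtain ⟨hna, hca⟩ := ha
  -- a⁻¹ commutes with everything
  have hcomm : ∀ x : L, a⁻¹ * x = x * a⁻¹ := by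
    intro x
    apply mul_left_cancel (a := a)
    rw [← nuc_left hna a⁻¹ x, CLoop.mul_inv, MulLoop.one_mul, ← nuc_left hna x a⁻¹,
        hca x, nuc_mid hna x a⁻¹, CLoop.mul_inv, MulLoop.mul_one]
  -- left nuclearity of a⁻¹
  have hleft : ∀ x y : L, a⁻¹ * x * y = a⁻¹ * (x * y) := by
    intro x y
    apply mul_left_cancel (a := a)
    rw [← nuc_left hna (a⁻¹*x) y, ← nuc_left hna a⁻¹ x, ← nuc_left hna a⁻¹ (x*y)]
    simp only [CLoop.mul_inv, MulLoop.one_mul]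
  -- right nuclearity of a⁻¹
  have hright : ∀ x y : L, x * y * a⁻¹ = x * (y * a⁻¹) := by
    intro x y
    apply mul_right_cancel (a := a)
    rw [nuc_right hna (x*y) a⁻¹, nuc_right hna x (y*a⁻¹), nuc_right hna y a⁻¹]
    simp only [CLoop.inv_mul, MulLoop.mul_one]
  refine ⟨fun x y => ⟨hleft x y, ?_, hright x y⟩, hcomm⟩
  rw [← hcomm x, hleft x y, hcomm (x * y), hright x y, ← hcomm y]

/-- The congruence modulo the center. -/
instance ctr : Setoid L where
  r x y := ∃ z ∈ loopCenter L, x = y * z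
  iseqv := by
    refine ⟨fun x => ⟨1, one_center, (MulLoop.mul_one x).symm⟩, ?_, ?_⟩
    · rintro x y ⟨z, hz, rfl⟩
      refine ⟨z⁻¹, center_inv hz, ?_⟩
      rw [nuc_mid (center_nuc hz), CLoop.mul_inv, MulLoop.mul_one]
    · rintro x y w ⟨z1, hz1, rfl⟩ ⟨z2, hz2, rfl⟩
      exact ⟨z2 * z1, center_mul hz2 hz1, nuc_right (center_nuc hz1) w z2⟩

lemma ctr_mul {a b c d : L} (h1 : a ≈ b) (h2 : c ≈ d) : a * c ≈ b * d := by
  obtain ⟨z1, hz1, rfl⟩ := h1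
  obtain ⟨z2, hz2, rfl⟩ := h2
  refine ⟨z2 * z1, center_mul hz2 hz1, ?_⟩
  rw [nuc_mid (center_nuc hz1), center_comm hz1, nuc_right (center_nuc hz1),
      ← nuc_right (center_nuc (center_mul hz2 hz1))]

/-- The quotient of `L` by its center. -/
abbrev Q (L : Type) [CLoop L] : Type := Quotient (ctr (L := L))

instance : Mul (Q L) := ⟨Quotient.map₂ (· * ·) (fun _ _ h1 _ _ h2 => ctr_mul h1 h2)⟩
instance : One (Q L) := ⟨⟦(1 : L)⟧⟩

lemma q_mul (a b : L) : (⟦a⟧ * ⟦b⟧ : Q L) = ⟦a * b⟧ := rfl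

instance : MulLoop (Q L) where
  one_mul := by
    rintro ⟨x⟩
    show (⟦(1 : L)⟧ * ⟦x⟧ : Q L) = ⟦x⟧
    rw [q_mul, MulLoop.one_mul]
  mul_one := by
    rintro ⟨x⟩
    show (⟦x⟧ * ⟦(1 : L)⟧ : Q L) = ⟦x⟧
    rw [q_mul, MulLoop.mul_one]
  mulLeft_bijective := by
    rintro ⟨a⟩
    constructor
    · rintro ⟨x⟩ ⟨y⟩ h
      have h' : (a * x : L) ≈ a * y := Quotient.exact h
      obtain ⟨z, hz, heq⟩ := h'
      rw [nuc_right (center_nuc hz)] at heq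
      exact Quotient.sound ⟨z, hz, mul_left_cancel heq⟩
    · rintro ⟨b⟩
      obtain ⟨x, hx⟩ := (MulLoop.mulLeft_bijective a).2 b
      refine ⟨⟦x⟧, ?_⟩
      show (⟦a⟧ * ⟦x⟧ : Q L) = ⟦b⟧
      rw [q_mul, show a * x = b from hx]
  mulRight_bijective := by
    rintro ⟨a⟩
    constructor
    · rintro ⟨x⟩ ⟨y⟩ h
      have h' : (x * a : L) ≈ y * a := Quotient.exact h
      obtain ⟨z, hz, heq⟩ := h'
      rw [nuc_right (center_nuc hz), ← center_comm hz a, ← nuc_mid (center_nuc hz) y a] at heq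
      exact Quotient.sound ⟨z, hz, mul_right_cancel heq⟩
    · rintro ⟨b⟩
      obtain ⟨x, hx⟩ := (MulLoop.mulRight_bijective a).2 b
      refine ⟨⟦x⟧, ?_⟩
      show (⟦x⟧ * ⟦a⟧ : Q L) = ⟦b⟧
      rw [q_mul, show x * a = b from hx]

/-- Commutativity from the two cancellation laws in any loop. -/
lemma comm_of_cancel {M : Type} [MulLoop M]
    (hl : ∀ x y : M, x * (x * y) = y) (hr : ∀ x y : M, (y * x) * x = y)
    (x y : M) : x * y = y * x := by
  have h1 : x * (x * y) = y := hl x y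
  have h2 : y * (x * y) = x := by
    have h := hr (x * y) x
    rwa [h1] at h
  have h3 : y * (y * x) = x := hl y x
  exact ((MulLoop.mulLeft_bijective y).1 (h3.trans h2.symm)).symm

/-- Given that all squares are central, the quotient is Steiner. -/
def steiner (hZ : ∀ x : L, x * x ∈ loopCenter L) : SteinerLoop (Q L) := by
  have hcancel : ∀ X Y : Q L, X * (X * Y) = Y := by
    rintro ⟨x⟩ ⟨y⟩
    show (⟦x⟧ * (⟦x⟧ * ⟦y⟧) : Q L) = ⟦y⟧
    rw [q_mul, q_mul]
    exact Quotient.sound ⟨x * x, hZ x, by rw [lc, center_comm (hZ x)]⟩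
  have hrcancel : ∀ X Y : Q L, (Y * X) * X = Y := by
    rintro ⟨x⟩ ⟨y⟩
    show ((⟦y⟧ * ⟦x⟧) * ⟦x⟧ : Q L) = ⟦y⟧
    rw [q_mul, q_mul]
    exact Quotient.sound ⟨x * x, hZ x, rc y x⟩
  exact
    { comm := comm_of_cancel hcancel hrcancel
      sq := by
        rintro ⟨x⟩
        show (⟦x⟧ * ⟦x⟧ : Q L) = ⟦(1 : L)⟧
        rw [q_mul]
        exact Quotient.sound ⟨x * x, hZ x, (MulLoop.one_mul _).symm⟩
      cancel := hcancel }

end Stmt5Aux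

open Stmt5Aux in
/-- For a C-loop `L`, the quotient `L/Z(L)` is a Steiner loop iff all squares of
`L` are central.  (The quotient is expressed as a surjective loop homomorphism
whose kernel is exactly the center.) -/
theorem stmt5 {L : Type} [CLoop L] :
    (∃ (S : Type) (_ : SteinerLoop S) (φ : L → S),
        Function.Surjective φ ∧ (∀ x y : L, φ (x * y) = φ x * φ y) ∧
        (∀ x : L, φ x = 1 ↔ x ∈ loopCenter L))
    ↔ ∀ x : L, x * x ∈ loopCenter L := by
  constructor
  · rintro ⟨S, hS, φ, -, hhom, hker⟩ x
    have h1 : φ (x * x) = 1 := by rw [hhom]; exact hS.sq (φ x)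
    exact (hker (x * x)).1 h1
  · intro hZ
    refine ⟨Q L, steiner hZ, Quotient.mk _, ?_, fun x y => rfl, fun x => ?_⟩
    · rintro ⟨x⟩; exact ⟨x, rfl⟩
    · constructor
      · intro h
        obtain ⟨z, hz, heq⟩ := Quotient.exact h
        rw [MulLoop.one_mul] at heq; subst heq; exact hz
      · intro hx
        exact Quotient.sound ⟨x, hx, (MulLoop.one_mul x).symm⟩
end

section
/- Let C be a loop whose nucleus N = N(C) is an abelian normal subloop. If the quotient C/N is simple and nonassociative, then N(C) = Z(C). -/
/-- Right division: `rdiv y x * x = y`. -/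
noncomputable def rdiv {C : Type} [MulLoop C] (y x : C) : C :=
  ((MulLoop.mulRight_bijective x).surjective y).choose

lemma rdiv_spec {C : Type} [MulLoop C] (y x : C) : rdiv y x * x = y :=
  ((MulLoop.mulRight_bijective x).surjective y).choose_spec

/-- `alphaFun x a` is the unique `b` with `b * x = x * a`. -/
noncomputable def alphaFun {C : Type} [MulLoop C] (x a : C) : C := rdiv (x * a) x

lemma alphaFun_spec {C : Type} [MulLoop C] (x a : C) : alphaFun x a * x = x * a :=
  rdiv_spec _ _

open Classical in
/-- The action of `x` on the nucleus, extended by the identity off the nucleus. -/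
noncomputable def Gfun {C : Type} [MulLoop C] (x a : C) : C :=
  if a ∈ nucleus C then alphaFun x a else a

/-- If a loop `C` has abelian nucleus `N` and the quotient `C/N` (expressed as a
surjective loop homomorphism with kernel `N`) is simple and nonassociative, then
`N(C) = Z(C)`. -/
theorem stmt6 {C : Type} [MulLoop C]
    (habel : ∀ a ∈ nucleus C, ∀ b ∈ nucleus C, a * b = b * a)
    (S : Type) [MulLoop S] (φ : C → S)
    (hsurj : Function.Surjective φ)
    (hhom : ∀ x y : C, φ (x * y) = φ x * φ y)
    (hker : ∀ x : C, φ x = 1 ↔ x ∈ nucleus C)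
    (hsimple : ∀ (T : Type) [MulLoop T] (ψ : S → T),
        Function.Surjective ψ → (∀ x y : S, ψ (x * y) = ψ x * ψ y) →
        Function.Injective ψ ∨ Subsingleton T)
    (hnonassoc : ¬ ∀ x y z : S, x * y * z = x * (y * z)) :
    nucleus C = loopCenter C := by
  classical
  have lcan : ∀ a x y : C, a * x = a * y → x = y :=
    fun a x y h => (MulLoop.mulLeft_bijective a).injective h
  have rcan : ∀ a x y : C, x * a = y * a → x = y :=
    fun a x y h => (MulLoop.mulRight_bijective a).injective h
  have lcanS : ∀ a x y : S, a * x = a * y → x = y :=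
    fun a x y h => (MulLoop.mulLeft_bijective a).injective h
  have rcanS : ∀ a x y : S, x * a = y * a → x = y :=
    fun a x y h => (MulLoop.mulRight_bijective a).injective h
  have hα : ∀ x a : C, alphaFun x a * x = x * a := fun x a => alphaFun_spec x a
  have hαu : ∀ x a b : C, b * x = x * a → b = alphaFun x a :=
    fun x a b h => rcan x _ _ (h.trans (hα x a).symm)
  have hone : ∀ a : C, alphaFun (1:C) a = a :=
    fun a => (hαu 1 a a (by rw [MulLoop.mul_one, MulLoop.one_mul])).symm
  have hmemN : ∀ x : C, ∀ a ∈ nucleus C, alphaFun x a ∈ nucleus C := by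
    intro x a ha
    rw [← hker]
    have h1 : φ (alphaFun x a) * φ x = 1 * φ x := by
      rw [← hhom, hα, hhom, (hker a).2 ha, MulLoop.mul_one, MulLoop.one_mul]
    exact rcanS (φ x) _ _ h1
  have hαmul : ∀ x y a : C, a ∈ nucleus C →
      alphaFun (x * y) a = alphaFun x (alphaFun y a) := by
    intro x y a ha
    have hb := hmemN y a ha
    have hc := hmemN x _ hb
    symm
    apply hαu
    calc alphaFun x (alphaFun y a) * (x * y)
        = alphaFun x (alphaFun y a) * x * y := (hc x y).1.symm
      _ = x * alphaFun y a * y := by rw [hα]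
      _ = x * (alphaFun y a * y) := (hb x y).2.1
      _ = x * (y * a) := by rw [hα]
      _ = x * y * a := ((ha x y).2.2).symm
  have hαN : ∀ n ∈ nucleus C, ∀ a ∈ nucleus C, alphaFun n a = a := by
    intro n hn a ha
    exact (hαu n a a (habel a ha n hn)).symm
  -- lemmas about Gfun
  have hGone : Gfun (1 : C) = id := by
    funext a
    by_cases ha : a ∈ nucleus C <;> simp [Gfun, ha, hone]
  have hGmul : ∀ x y : C, Gfun (x * y) = Gfun x ∘ Gfun y := by
    intro x y
    funext a
    by_cases ha : a ∈ nucleus C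
    · simp [Gfun, ha, hmemN y a ha, hαmul x y a ha]
    · simp [Gfun, ha]
  have hGN : ∀ n ∈ nucleus C, Gfun n = (id : C → C) := by
    intro n hn
    funext a
    by_cases ha : a ∈ nucleus C <;> simp [Gfun, ha, hαN n hn]
  have hGwell : ∀ x y : C, φ x = φ y → Gfun x = Gfun y := by
    intro x y hxy
    obtain ⟨n, hn⟩ := (MulLoop.mulLeft_bijective x).surjective y
    simp only at hn
    have hnN : n ∈ nucleus C := by
      rw [← hker]
      apply lcanS (φ x)
      rw [← hhom, hn, MulLoop.mul_one, hxy]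
    rw [← hn, hGmul, hGN n hnN, Function.comp_id]
  have hGbij : ∀ x : C, Function.Bijective (Gfun x) := by
    intro x
    obtain ⟨xr, hxr⟩ := (MulLoop.mulLeft_bijective x).surjective 1
    obtain ⟨xl, hxl⟩ := (MulLoop.mulRight_bijective x).surjective 1
    simp only at hxr hxl
    have h1 : Gfun x ∘ Gfun xr = id := by rw [← hGmul, hxr, hGone]
    have h2 : Gfun xl ∘ Gfun x = id := by rw [← hGmul, hxl, hGone]
    exact ⟨Function.LeftInverse.injective (g := Gfun xl) (fun a => congrFun h2 a),
      fun b => ⟨Gfun xr b, congrFun h1 b⟩⟩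
  -- the image loop
  let Tt : Type := {f : C → C // ∃ x : C, Gfun x = f}
  letI instT : MulLoop Tt :=
    { mul := fun f g => ⟨f.1 ∘ g.1, by
        obtain ⟨x, hx⟩ := f.2
        obtain ⟨y, hy⟩ := g.2
        exact ⟨x * y, by rw [hGmul, hx, hy]⟩⟩
      one := ⟨id, 1, hGone⟩
      one_mul := fun f => Subtype.ext (Function.id_comp f.1)
      mul_one := fun f => Subtype.ext (Function.comp_id f.1)
      mulLeft_bijective := by
        intro f
        constructor
        · intro g g' h
          obtain ⟨x, hx⟩ := f.2
          have h1 : f.1 ∘ g.1 = f.1 ∘ g'.1 := congrArg Subtype.val h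
          apply Subtype.ext
          funext a
          apply (hGbij x).injective
          have := congrFun h1 a
          simpa [← hx] using this
        · intro h
          obtain ⟨x, hx⟩ := f.2
          obtain ⟨z, hz⟩ := h.2
          obtain ⟨w, hw⟩ := (MulLoop.mulLeft_bijective x).surjective z
          simp only at hw
          refine ⟨⟨Gfun w, w, rfl⟩, ?_⟩
          apply Subtype.ext
          show f.1 ∘ Gfun w = h.1
          rw [← hx, ← hGmul, hw, hz]
      mulRight_bijective := by
        intro f
        constructor
        · intro g g' h
          obtain ⟨x, hx⟩ := f.2
          have h1 : g.1 ∘ f.1 = g'.1 ∘ f.1 := congrArg Subtype.val h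
          apply Subtype.ext
          funext a
          obtain ⟨b, hb⟩ := (hGbij x).surjective a
          have := congrFun h1 b
          simp only [Function.comp_apply, ← hx] at this
          rwa [hb] at this
        · intro h
          obtain ⟨x, hx⟩ := f.2
          obtain ⟨z, hz⟩ := h.2
          obtain ⟨w, hw⟩ := (MulLoop.mulRight_bijective x).surjective z
          simp only at hw
          refine ⟨⟨Gfun w, w, rfl⟩, ?_⟩
          apply Subtype.ext
          show Gfun w ∘ f.1 = h.1
          rw [← hx, ← hGmul, hw, hz] }
  let ψ : S → Tt := fun s => ⟨Gfun (hsurj s).choose, _, rfl⟩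
  have hψhom : ∀ s t : S, ψ (s * t) = ψ s * ψ t := by
    intro s t
    apply Subtype.ext
    show Gfun (hsurj (s * t)).choose = Gfun (hsurj s).choose ∘ Gfun (hsurj t).choose
    rw [← hGmul]
    apply hGwell
    rw [hhom, (hsurj s).choose_spec, (hsurj t).choose_spec, (hsurj (s * t)).choose_spec]
  have hψsurj : Function.Surjective ψ := by
    intro f
    obtain ⟨x, hx⟩ := f.2
    refine ⟨φ x, Subtype.ext ?_⟩
    show Gfun (hsurj (φ x)).choose = f.1
    rw [← hx]
    exact hGwell _ _ ((hsurj (φ x)).choose_spec)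
  rcases hsimple Tt ψ hψsurj hψhom with hinj | hsub
  · exfalso
    apply hnonassoc
    intro x y z
    apply hinj
    have assocT : ∀ f g h : Tt, f * g * h = f * (g * h) := fun f g h => Subtype.ext rfl
    rw [hψhom, hψhom, hψhom, hψhom, assocT]
  · have hid : ∀ x : C, Gfun x = (id : C → C) := by
      intro x
      have := Subsingleton.elim (⟨Gfun x, x, rfl⟩ : Tt) ⟨id, 1, hGone⟩
      exact congrArg Subtype.val this
    apply Set.eq_of_subset_of_subset
    · intro a ha
      refine ⟨ha, fun x => ?_⟩
      have h1 : Gfun x a = a := congrFun (hid x) a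
      simp only [Gfun, if_pos ha] at h1
      rw [← hα x a, h1]
    · intro a ha
      exact ha.1
end

section
/- Let Q be a Steiner loop, K an abelian group (additive), and f : Q × Q → K a map satisfying f(x,1) = 0 = f(1,x) and f(y,y) = 0 for all x,y ∈ Q. Then the loop K ×_id^f Q with multiplication (a,x)*(b,y) = (a+b+f(x,y), xy) is a C-loop if and only if f(xy,y) = −f(x,y) and f(y,yz) = −f(y,z) hold for all x,y,z ∈ Q. -/
/-- For `Q` Steiner, `K` abelian, and `f` normalized with zero diagonal, the
central extension `K ×_id^f Q` is a C-loop iff `f(xy,y) = -f(x,y)` and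
`f(y,yz) = -f(y,z)`. -/
theorem stmt8 {Q : Type} [SteinerLoop Q] {K : Type} [AddCommGroup K]
    (f : Q → Q → K)
    (hf1 : ∀ x : Q, f x 1 = 0 ∧ f 1 x = 0)
    (hdiag : ∀ y : Q, f y y = 0)
    (m : K × Q → K × Q → K × Q)
    (hm : ∀ p q : K × Q, m p q = (p.1 + q.1 + f p.2 q.2, p.2 * q.2)) :
    ((∀ p : K × Q, m ((0 : K), (1 : Q)) p = p ∧ m p ((0 : K), (1 : Q)) = p) ∧
     (∀ p : K × Q, Function.Bijective (m p) ∧ Function.Bijective fun q => m q p) ∧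
     (∀ u v w : K × Q, m u (m v (m v w)) = m (m (m u v) v) w))
    ↔
    ((∀ x y : Q, f (x * y) y = -f x y) ∧ (∀ y z : Q, f y (y * z) = -f y z)) := by
  have rc : ∀ x y : Q, (x * y) * y = x := fun x y => by
    rw [SteinerLoop.comm, SteinerLoop.comm x y, SteinerLoop.cancel]
  constructor
  · rintro ⟨-, -, hC⟩
    constructor
    · intro x y
      have h := congrArg Prod.fst (hC ((0:K), x) ((0:K), y) ((0:K), (1:Q)))
      simp [hm, MulLoop.mul_one, MulLoop.one_mul, (hf1 _).1, (hf1 _).2,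
        hdiag, SteinerLoop.cancel, rc, SteinerLoop.sq] at h
      rw [eq_neg_iff_add_eq_zero, add_comm]
      exact h.symm
    · intro y z
      have h := congrArg Prod.fst (hC ((0:K), (1:Q)) ((0:K), y) ((0:K), z))
      simp [hm, MulLoop.mul_one, MulLoop.one_mul, (hf1 _).1, (hf1 _).2,
        hdiag, SteinerLoop.cancel, rc, SteinerLoop.sq] at h
      rw [eq_neg_iff_add_eq_zero, add_comm]
      exact h
  · rintro ⟨h1, h2⟩
    refine ⟨?_, ?_, ?_⟩
    · intro p
      constructor <;> · simp [hm, MulLoop.mul_one, MulLoop.one_mul, (hf1 _).1, (hf1 _).2]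
    · intro p
      constructor
      · rw [Function.bijective_iff_has_inverse]
        refine ⟨fun q => (q.1 - p.1 - f p.2 (p.2 * q.2), p.2 * q.2), fun q => ?_, fun q => ?_⟩ <;>
          · simp only [hm]; rw [Prod.ext_iff]; dsimp; rw [SteinerLoop.cancel]
            exact ⟨by abel, rfl⟩
      · rw [Function.bijective_iff_has_inverse]
        refine ⟨fun q => (q.1 - p.1 - f (p.2 * q.2) p.2, p.2 * q.2), fun q => ?_, fun q => ?_⟩
        · simp only [hm]; rw [Prod.ext_iff]; dsimp
          rw [SteinerLoop.comm q.2 p.2, SteinerLoop.cancel]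
          exact ⟨by abel, rfl⟩
        · simp only [hm]; rw [Prod.ext_iff]; dsimp
          rw [SteinerLoop.comm _ p.2, SteinerLoop.cancel]
          exact ⟨by abel, rfl⟩
    · intro u v w
      have : v.2 * (v.2 * w.2) = w.2 := SteinerLoop.cancel _ _
      ext
      · simp [hm, SteinerLoop.cancel, rc, h1, h2]
        abel
      · simp [hm, SteinerLoop.cancel, rc]
end

section
/- In a C-loop C in which every square is central, the following are equivalent: (i) C is flexible (x·(yx) = (xy)·x for all x,y); (ii) (xy)² = (yx)² for all x,y ∈ C; (iii) the map x ↦ x³ is an antiautomorphism of C (i.e., (xy)³ = y³x³ for all x,y). -/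
/-!
Write `s = x²`, `t = y²`, `A = (xy)²`; all squares are central. A C-loop is left alternative and
has the inverse property, so `x⁻¹ = x⁻² x` and hence `(yx)⁻¹ = x⁻¹y⁻¹ = x⁻² y⁻² (xy)`; undoing this
inversion gives the commutation rule `(yx) A = (xy)(s t)`. Pushing central factors around with it,
each of the three conditions, at a fixed pair `x, y`, becomes equivalent to `A² = s² t²`,
i.e. `(xy)⁴ = x⁴ y⁴`.
-/

namespace MulLoop

variable {L : Type*} [MulLoop L]

theorem mul_left_cancel (a : L) {u v : L} (h : a * u = a * v) : u = v :=
  (mulLeft_bijective a).1 h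

theorem mul_right_cancel (a : L) {u v : L} (h : u * a = v * a) : u = v :=
  (mulRight_bijective a).1 h

end MulLoop

namespace loopCenter

variable {L : Type*} [Mul L] {a : L}

theorem assoc_left (ha : a ∈ loopCenter L) (x y : L) : a * x * y = a * (x * y) :=
  (ha.1 x y).1

theorem assoc_mid (ha : a ∈ loopCenter L) (x y : L) : x * a * y = x * (a * y) :=
  (ha.1 x y).2.1

theorem assoc_right (ha : a ∈ loopCenter L) (x y : L) : x * y * a = x * (y * a) :=
  (ha.1 x y).2.2

theorem comm (ha : a ∈ loopCenter L) (x : L) : a * x = x * a :=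
  ha.2 x

theorem left_comm (ha : a ∈ loopCenter L) (x y : L) : x * (a * y) = a * (x * y) := by
  rw [← assoc_mid ha, ← comm ha, assoc_left ha]

theorem mul_mul_self (ha : a ∈ loopCenter L) (u : L) : a * u * (a * u) = a * a * (u * u) := by
  rw [assoc_left ha, left_comm ha, assoc_left ha]

end loopCenter

namespace CLoop

variable {C : Type*} [CLoop C]

theorem left_alternative (x z : C) : x * (x * z) = x * x * z := by
  simpa only [MulLoop.one_mul] using c_law 1 x z

theorem mul_inv_cancel_left (x y : C) : x * (x⁻¹ * y) = y := by
  obtain ⟨z, rfl⟩ := (MulLoop.mulLeft_bijective x⁻¹).2 y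
  simpa only [mul_inv, MulLoop.one_mul] using c_law x x⁻¹ z

theorem inv_inv (x : C) : x⁻¹⁻¹ = x :=
  MulLoop.mul_left_cancel x⁻¹ (by rw [mul_inv, inv_mul])

theorem inv_mul_cancel_left (x y : C) : x⁻¹ * (x * y) = y := by
  simpa only [inv_inv] using mul_inv_cancel_left x⁻¹ y

theorem inv_mul_cancel_right (x y : C) : x * y⁻¹ * y = x := by
  obtain ⟨z, rfl⟩ := (MulLoop.mulRight_bijective y⁻¹).2 x
  simpa only [inv_mul, MulLoop.mul_one] using (c_law z y⁻¹ y).symm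

theorem mul_inv_cancel_right (x y : C) : x * y * y⁻¹ = x := by
  simpa only [inv_inv] using inv_mul_cancel_right x y⁻¹

theorem mul_inv_rev (x y : C) : (x * y)⁻¹ = y⁻¹ * x⁻¹ := by
  have h : (x * y)⁻¹ * x = y⁻¹ := by
    simpa only [mul_inv_cancel_right] using inv_mul_cancel_left (x * y) y⁻¹
  rw [← h, mul_inv_cancel_right]

theorem inv_mul_inv_mul_self (x : C) : x⁻¹ * x⁻¹ * x = x⁻¹ := by
  rw [← left_alternative, inv_mul, MulLoop.mul_one]

section CentralSquares

open loopCenter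

theorem swap_mul_mul_sq (hsq : ∀ x : C, x * x ∈ loopCenter C) (x y : C) :
    y * x * (x * y * (x * y)) = x * y * (x * x * (y * y)) := by
  have hs := hsq x
  have hA := hsq (x * y)
  have hu := hsq x⁻¹
  have hv := hsq y⁻¹
  have inv_swap : (y * x)⁻¹ = x⁻¹ * x⁻¹ * (y⁻¹ * y⁻¹ * (x * y)) := by
    rw [mul_inv_rev]
    conv_lhs => rw [← inv_mul_inv_mul_self x, ← inv_mul_inv_mul_self y]
    rw [assoc_left hu, left_comm hv]
  apply MulLoop.mul_left_cancel (y * x)⁻¹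
  rw [inv_mul_cancel_left, inv_swap, assoc_left hu, assoc_left hv, left_alternative,
    left_comm hA, left_comm hs, ← left_alternative y⁻¹, inv_mul_cancel_left, inv_mul,
    MulLoop.mul_one, left_comm hA, ← left_alternative x⁻¹, inv_mul_cancel_left, inv_mul,
    MulLoop.mul_one]

theorem flexible_iff_fourth_pow (hsq : ∀ x : C, x * x ∈ loopCenter C) (x y : C) :
    x * (y * x) = x * y * x ↔
      x * y * (x * y) * (x * y * (x * y)) = x * x * (x * x) * (y * y * (y * y)) := by
  have hs := hsq x
  have ht := hsq y
  have hA := hsq (x * y)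
  have hss := hsq (x * x)
  have left : x * (y * x) * (x * y * (x * y)) * (y * y) =
      y * (x * x * (x * x) * (y * y * (y * y))) := by
    rw [assoc_right hA, swap_mul_mul_sq hsq, left_comm hs, left_comm hs, assoc_right ht x y,
      left_alternative, left_alternative, assoc_right ht (x * x * (x * x)), assoc_right ht y,
      ← left_comm hss y]
  -- the commutation rule for the pair `x, xy`, with the factor `x⁴` cancelled
  have right_sq : x * y * x * (y * y) = y * (x * y * (x * y)) := by
    have h := swap_mul_mul_sq hsq x (x * y)
    rw [left_alternative, mul_mul_self hs y, assoc_left hs y, left_comm hs y,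
      left_alternative (x * x), left_comm hss (x * y * x)] at h
    exact MulLoop.mul_left_cancel _ h
  have right : x * y * x * (x * y * (x * y)) * (y * y) =
      y * (x * y * (x * y) * (x * y * (x * y))) := by
    rw [assoc_right ht, comm hA (y * y), ← assoc_right hA (x * y * x), right_sq,
      assoc_right hA y]
  constructor
  · intro h
    rw [h, right] at left
    exact MulLoop.mul_left_cancel y left
  · intro h
    apply MulLoop.mul_right_cancel (x * y * (x * y))
    apply MulLoop.mul_right_cancel (y * y)
    rw [left, right, h]

theorem sq_mul_comm_iff_fourth_pow (hsq : ∀ x : C, x * x ∈ loopCenter C) (x y : C) :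
    x * y * (x * y) = y * x * (y * x) ↔
      x * y * (x * y) * (x * y * (x * y)) = x * x * (x * x) * (y * y * (y * y)) := by
  have hs := hsq x
  have ht := hsq y
  have hA := hsq (x * y)
  have hss := hsq (x * x)
  -- square the commutation rule
  have key : x * y * (x * y) * (x * y * (x * y)) * (y * x * (y * x)) =
      x * x * (x * x) * (y * y * (y * y)) * (x * y * (x * y)) := by
    rw [← mul_mul_self hA (y * x), comm hA (y * x), swap_mul_mul_sq hsq, left_comm hs (x * y),
      mul_mul_self hs, ← comm ht (x * y), mul_mul_self ht, assoc_left hss]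
  constructor
  · intro h
    rw [← h] at key
    exact MulLoop.mul_right_cancel _ key
  · intro h
    apply MulLoop.mul_left_cancel (x * y * (x * y) * (x * y * (x * y)))
    rw [key, h]

theorem cube_mul_rev_iff_fourth_pow (hsq : ∀ x : C, x * x ∈ loopCenter C) (x y : C) :
    x * y * (x * y) * (x * y) = y * y * y * (x * x * x) ↔
      x * y * (x * y) * (x * y * (x * y)) = x * x * (x * x) * (y * y * (y * y)) := by
  have hs := hsq x
  have ht := hsq y
  have hA := hsq (x * y)
  have hss := hsq (x * x)
  have lhs_cube : x * y * (x * y) * (x * y) * (x * y * (x * y)) =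
      x * y * (x * y) * (x * y * (x * y)) * (x * y) := by
    rw [assoc_right hA, ← comm hA (x * y), left_alternative]
  have rhs_cube : y * y * y * (x * x * x) * (x * y * (x * y)) =
      x * x * (x * x) * (y * y * (y * y)) * (x * y) := by
    rw [assoc_left ht y, left_comm hs y x, assoc_left ht, assoc_left hs, swap_mul_mul_sq hsq,
      left_comm hs (x * y) (y * y), left_alternative (x * x), ← comm ht (x * y),
      left_comm hss (y * y), left_alternative (y * y), assoc_left hss]
  constructor
  · intro h
    apply MulLoop.mul_right_cancel (x * y)
    rw [← lhs_cube, ← rhs_cube, h]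
  · intro h
    apply MulLoop.mul_right_cancel (x * y * (x * y))
    rw [lhs_cube, rhs_cube, h]

end CentralSquares

end CLoop

/-- In a C-loop with central squares, flexibility, the identity `(xy)² = (yx)²`,
and `x ↦ x³` being an antiautomorphism are all equivalent. -/
theorem stmt9 {C : Type} [CLoop C]
    (hsq : ∀ x : C, x * x ∈ loopCenter C) :
    ((∀ x y : C, x * (y * x) = (x * y) * x) ↔
      (∀ x y : C, (x * y) * (x * y) = (y * x) * (y * x))) ∧
    ((∀ x y : C, x * (y * x) = (x * y) * x) ↔
      (∀ x y : C, ((x * y) * (x * y)) * (x * y) = ((y * y) * y) * ((x * x) * x))) := by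
  open CLoop in
  exact ⟨forall₂_congr fun x y => (flexible_iff_fourth_pow hsq x y).trans
      (sq_mul_comm_iff_fourth_pow hsq x y).symm,
    forall₂_congr fun x y => (flexible_iff_fourth_pow hsq x y).trans
      (cube_mul_rev_iff_fourth_pow hsq x y).symm⟩
end

section
/- Every C-loop of exponent 4 in which all squares are central is flexible. -/
namespace CLoopAux

variable {C : Type} [CLoop C]

lemma lcancel (a : C) {u v : C} (h : a * u = a * v) : u = v :=
  (MulLoop.mulLeft_bijective a).1 h

lemma left_alt (x z : C) : x * (x * z) = (x * x) * z := by
  have h := CLoop.c_law (1 : C) x z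
  rwa [MulLoop.one_mul, MulLoop.one_mul] at h

lemma right_alt (x y : C) : (x * y) * y = x * (y * y) := by
  have h := CLoop.c_law x y (1 : C)
  rw [MulLoop.mul_one, MulLoop.mul_one] at h
  exact h.symm

lemma lip (y w : C) : y⁻¹ * (y * w) = w := by
  obtain ⟨z, hz⟩ := (MulLoop.mulLeft_bijective y).2 w
  have hz' : y * z = w := hz
  have h := CLoop.c_law y⁻¹ y z
  rw [CLoop.inv_mul, MulLoop.one_mul] at h
  rw [← hz', h]

lemma rip (y w : C) : (w * y) * y⁻¹ = w := by
  obtain ⟨x, hx⟩ := (MulLoop.mulRight_bijective y).2 w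
  have hx' : x * y = w := hx
  have h := CLoop.c_law x y y⁻¹
  rw [CLoop.mul_inv, MulLoop.mul_one] at h
  rw [← hx', ← h]

lemma inv_anti (x y : C) : (x * y)⁻¹ = y⁻¹ * x⁻¹ := by
  have h1 : y * (x * y)⁻¹ = x⁻¹ := by
    have h := rip (x * y) x⁻¹
    rwa [lip x y] at h
  have h2 := lip y (x * y)⁻¹
  rw [h1] at h2
  exact h2.symm

lemma cen_comm {c : C} (hc : c ∈ loopCenter C) (a : C) : c * a = a * c := hc.2 a

lemma cen_assoc {c : C} (hc : c ∈ loopCenter C) (a b : C) :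
    (c * a) * b = c * (a * b) := (hc.1 a b).1

lemma cen_swap {c : C} (hc : c ∈ loopCenter C) (a b : C) :
    a * (c * b) = c * (a * b) := by
  rw [← (hc.1 a b).2.1, ← hc.2 a, (hc.1 a b).1]

lemma cen_cancel {c : C} (hc : c ∈ loopCenter C) (h1 : c * c = 1) (w : C) :
    c * (c * w) = w := by rw [← cen_assoc hc, h1, MulLoop.one_mul]

lemma inv_eq (hsq : ∀ x : C, x * x ∈ loopCenter C)
    (hexp : ∀ x : C, (x * x) * (x * x) = 1) (x : C) : x⁻¹ = (x * x) * x := by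
  apply lcancel x
  rw [CLoop.mul_inv, cen_comm (hsq x) x, left_alt x (x * x), hexp x]

end CLoopAux

open CLoopAux in
/-- A C-loop of exponent 4 with central squares is flexible. -/
theorem stmt10 {C : Type} [CLoop C]
    (hsq : ∀ x : C, x * x ∈ loopCenter C)
    (hexp : ∀ x : C, (x * x) * (x * x) = 1) :
    ∀ x y : C, x * (y * x) = (x * y) * x := by
  intro x y
  have hs := hsq (x * y)
  have ht := hsq y
  have hu := hsq x
  -- key1 : s * (x*y) = t * (u * (y*x))
  have key1 : ((x * y) * (x * y)) * (x * y) = (y * y) * ((x * x) * (y * x)) := by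
    have h := inv_anti x y
    rw [inv_eq hsq hexp (x * y), inv_eq hsq hexp x, inv_eq hsq hexp y] at h
    rw [cen_assoc ht y ((x * x) * x), cen_swap hu y x] at h
    exact h
  -- key3 : y*x = u * (t * (s * (x*y)))
  have key2 : (y * y) * (((x * y) * (x * y)) * (x * y)) = (x * x) * (y * x) := by
    rw [key1, cen_cancel ht (hexp y)]
  have key3 : y * x = (x * x) * ((y * y) * (((x * y) * (x * y)) * (x * y))) := by
    rw [key2, cen_cancel hu (hexp x)]
  -- key4 : x*y = s * (t * (u * (y*x)))
  have key4 : x * y = ((x * y) * (x * y)) * ((y * y) * ((x * x) * (y * x))) := by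
    rw [← key1, cen_cancel hs (hexp (x * y))]
  have hR : (x * y) * x = ((x * y) * (x * y)) * ((y * y) * y) :=
    calc (x * y) * x
        = (((x * y) * (x * y)) * ((y * y) * ((x * x) * (y * x)))) * x := by
          conv_lhs => rw [key4]
      _ = ((x * y) * (x * y)) * (((y * y) * ((x * x) * (y * x))) * x) := by
          rw [cen_assoc hs]
      _ = ((x * y) * (x * y)) * ((y * y) * (((x * x) * (y * x)) * x)) := by
          rw [cen_assoc ht ((x * x) * (y * x)) x]
      _ = ((x * y) * (x * y)) * ((y * y) * ((x * x) * ((y * x) * x))) := by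
          rw [cen_assoc hu (y * x) x]
      _ = ((x * y) * (x * y)) * ((y * y) * ((x * x) * (y * (x * x)))) := by
          rw [right_alt y x]
      _ = ((x * y) * (x * y)) * ((y * y) * ((x * x) * ((x * x) * y))) := by
          rw [← cen_comm hu y]
      _ = ((x * y) * (x * y)) * ((y * y) * y) := by
          rw [cen_cancel hu (hexp x) y]
  have hL : x * (y * x) = ((x * y) * (x * y)) * ((y * y) * y) :=
    calc x * (y * x)
        = x * ((x * x) * ((y * y) * (((x * y) * (x * y)) * (x * y)))) := by
          conv_lhs => rw [key3]
      _ = (x * x) * (x * ((y * y) * (((x * y) * (x * y)) * (x * y)))) := by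
          rw [cen_swap hu]
      _ = (x * x) * ((y * y) * (x * (((x * y) * (x * y)) * (x * y)))) := by
          rw [cen_swap ht x (((x * y) * (x * y)) * (x * y))]
      _ = (x * x) * ((y * y) * (((x * y) * (x * y)) * (x * (x * y)))) := by
          rw [cen_swap hs x (x * y)]
      _ = (x * x) * ((y * y) * (((x * y) * (x * y)) * ((x * x) * y))) := by
          rw [left_alt x y]
      _ = (x * x) * ((y * y) * ((x * x) * (((x * y) * (x * y)) * y))) := by
          rw [cen_swap hu ((x * y) * (x * y)) y]
      _ = (x * x) * ((x * x) * ((y * y) * (((x * y) * (x * y)) * y))) := by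
          rw [cen_swap hu (y * y) (((x * y) * (x * y)) * y)]
      _ = (y * y) * (((x * y) * (x * y)) * y) := by
          rw [cen_cancel hu (hexp x)]
      _ = ((x * y) * (x * y)) * ((y * y) * y) := by
          rw [cen_swap hs (y * y) y]
  rw [hL, hR]
end

section
/- Every C-loop whose nucleus has exactly 2 elements is flexible. -/
namespace CL
variable {C : Type} [CLoop C]

noncomputable def ld (a b : C) : C := ((MulLoop.mulLeft_bijective a).surjective b).choose
noncomputable def rd (a b : C) : C := ((MulLoop.mulRight_bijective b).surjective a).choose

lemma mul_ld (a b : C) : a * ld a b = b := ((MulLoop.mulLeft_bijective a).surjective b).choose_spec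
lemma rd_mul (a b : C) : rd a b * b = a := ((MulLoop.mulRight_bijective b).surjective a).choose_spec
lemma ld_mul (a b : C) : ld a (a * b) = b :=
  (MulLoop.mulLeft_bijective a).injective (show a * ld a (a*b) = a * b from mul_ld a (a*b))
lemma rd_cancel (a b : C) : rd (a * b) b = a :=
  (MulLoop.mulRight_bijective b).injective (show rd (a*b) b * b = a * b from rd_mul (a*b) b)

lemma one_mul' (x : C) : 1 * x = x := MulLoop.one_mul x
lemma mul_one' (x : C) : x * 1 = x := MulLoop.mul_one x
lemma mul_inv' (x : C) : x * x⁻¹ = 1 := CLoop.mul_inv x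
lemma inv_mul' (x : C) : x⁻¹ * x = 1 := CLoop.inv_mul x
lemma claw (x y z : C) : x * (y * (y * z)) = ((x * y) * y) * z := CLoop.c_law x y z


lemma eq_9 (x : C) :
    1 * x = x := by
  conv_lhs => rw [show 1 * x = x from one_mul' x]

lemma eq_10 (x : C) :
    x * 1 = x := by
  conv_lhs => rw [show x * 1 = x from mul_one' x]

lemma eq_11 (x : C) :
    x * x⁻¹ = 1 := by
  conv_lhs => rw [show x * x⁻¹ = 1 from mul_inv' x]

lemma eq_13 (x : C) :
    x⁻¹ * x = 1 := by
  conv_lhs => rw [show x⁻¹ * x = 1 from inv_mul' x]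

lemma eq_14 (x y : C) :
    x * (ld x y) = y := by
  conv_lhs => rw [show x * (ld x y) = y from mul_ld x y]

lemma eq_16 (x y : C) :
    ld x (x * y) = y := by
  conv_lhs => rw [show ld x (x * y) = y from ld_mul x y]

lemma eq_18 (x_110 : C) :
    ld x_110 1 = x_110⁻¹ := by
  conv_lhs => arg 2; rw [← show x_110 * x_110⁻¹ = 1 from eq_11 x_110]
  conv_lhs => rw [show ld x_110 (x_110 * x_110⁻¹) = x_110⁻¹ from eq_16 x_110 x_110⁻¹]

lemma eq_19 (y_118 : C) :
    y_118⁻¹⁻¹ = y_118 := by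
  conv_lhs => rw [← show ld y_118⁻¹ 1 = y_118⁻¹⁻¹ from eq_18 y_118⁻¹]
  conv_lhs => arg 2; rw [← show y_118⁻¹ * y_118 = 1 from eq_13 y_118]
  conv_lhs => rw [show ld y_118⁻¹ (y_118⁻¹ * y_118) = y_118 from eq_16 y_118⁻¹ y_118]

lemma eq_20 (x y : C) :
    (rd x y) * y = x := by
  conv_lhs => rw [show (rd x y) * y = x from rd_mul x y]

lemma eq_22 (x y : C) :
    rd (x * y) y = x := by
  conv_lhs => rw [show rd (x * y) y = x from rd_cancel x y]

lemma eq_26 (x_271 y_272 : C) :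
    ld (rd x_271 y_272) x_271 = y_272 := by
  conv_lhs => arg 2; rw [← show (rd x_271 y_272) * y_272 = x_271 from eq_20 x_271 y_272]
  conv_lhs => rw [show ld (rd x_271 y_272) ((rd x_271 y_272) * y_272) = y_272 from eq_16 (rd x_271 y_272) y_272]

lemma eq_28 (x y z : C) :
    ((x * y) * y) * z = x * (y * (y * z)) := by
  conv_lhs => rw [← show x * (y * (y * z)) = ((x * y) * y) * z from claw x y z]

lemma eq_29 (y_726 z_726 : C) :
    (y_726 * y_726) * z_726 = y_726 * (y_726 * z_726) := by
  conv_lhs => arg 1; arg 1; rw [← show 1 * y_726 = y_726 from eq_9 y_726]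
  conv_lhs => rw [show ((1 * y_726) * y_726) * z_726 = 1 * (y_726 * (y_726 * z_726)) from eq_28 1 y_726 z_726]
  conv_lhs => rw [show 1 * (y_726 * (y_726 * z_726)) = y_726 * (y_726 * z_726) from eq_9 (y_726 * (y_726 * z_726))]

lemma eq_43 (x_727 y_727 : C) :
    (x_727 * y_727) * y_727 = x_727 * (y_727 * y_727) := by
  conv_lhs => rw [← show ((x_727 * y_727) * y_727) * 1 = (x_727 * y_727) * y_727 from eq_10 ((x_727 * y_727) * y_727)]
  conv_lhs => rw [show ((x_727 * y_727) * y_727) * 1 = x_727 * (y_727 * (y_727 * 1)) from eq_28 x_727 y_727 1]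
  conv_lhs => arg 2; arg 2; rw [show y_727 * 1 = y_727 from eq_10 y_727]

lemma eq_50 (x_2359 y_2360 : C) :
    (rd x_2359 y_2360) * (y_2360 * y_2360) = x_2359 * y_2360 := by
  conv_lhs => rw [← show ((rd x_2359 y_2360) * y_2360) * y_2360 = (rd x_2359 y_2360) * (y_2360 * y_2360) from eq_43 (rd x_2359 y_2360) y_2360]
  conv_lhs => arg 1; rw [show (rd x_2359 y_2360) * y_2360 = x_2359 from eq_20 x_2359 y_2360]

lemma eq_51 (x_2365 y_2366 : C) :
    rd (x_2365 * (y_2366 * y_2366)) y_2366 = x_2365 * y_2366 := by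
  conv_lhs => arg 1; rw [← show (x_2365 * y_2366) * y_2366 = x_2365 * (y_2366 * y_2366) from eq_43 x_2365 y_2366]
  conv_lhs => rw [show rd ((x_2365 * y_2366) * y_2366) y_2366 = x_2365 * y_2366 from eq_22 (x_2365 * y_2366) y_2366]

lemma eq_54 (x_3415 y_3415 : C) :
    rd (x_3415 * y_3415) (y_3415 * y_3415) = rd x_3415 y_3415 := by
  conv_lhs => arg 1; rw [← show (rd x_3415 y_3415) * (y_3415 * y_3415) = x_3415 * y_3415 from eq_50 x_3415 y_3415]
  conv_lhs => rw [show rd ((rd x_3415 y_3415) * (y_3415 * y_3415)) (y_3415 * y_3415) = rd x_3415 y_3415 from eq_22 (rd x_3415 y_3415) (y_3415 * y_3415)]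

lemma eq_55 (x_3575 y_3576 : C) :
    (rd x_3575 (y_3576 * y_3576)) * y_3576 = rd x_3575 y_3576 := by
  conv_lhs => rw [← show rd ((rd x_3575 (y_3576 * y_3576)) * (y_3576 * y_3576)) y_3576 = (rd x_3575 (y_3576 * y_3576)) * y_3576 from eq_51 (rd x_3575 (y_3576 * y_3576)) y_3576]
  conv_lhs => arg 1; rw [show (rd x_3575 (y_3576 * y_3576)) * (y_3576 * y_3576) = x_3575 from eq_20 x_3575 (y_3576 * y_3576)]

lemma eq_59 (x_731 y_731 : C) :
    x_731 * (y_731 * (y_731 * (x_731 * (y_731 * y_731))⁻¹)) = 1 := by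
  conv_lhs => arg 2; arg 2; arg 2; arg 1; rw [← show (x_731 * y_731) * y_731 = x_731 * (y_731 * y_731) from eq_43 x_731 y_731]
  conv_lhs => rw [← show ((x_731 * y_731) * y_731) * ((x_731 * y_731) * y_731)⁻¹ = x_731 * (y_731 * (y_731 * ((x_731 * y_731) * y_731)⁻¹)) from eq_28 x_731 y_731 ((x_731 * y_731) * y_731)⁻¹]
  conv_lhs => rw [show ((x_731 * y_731) * y_731) * ((x_731 * y_731) * y_731)⁻¹ = 1 from eq_11 ((x_731 * y_731) * y_731)]

lemma eq_60 (y_742 z_742 : C) :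
    y_742⁻¹ * (y_742 * (y_742 * z_742)) = y_742 * z_742 := by
  conv_lhs => rw [← show ((y_742⁻¹ * y_742) * y_742) * z_742 = y_742⁻¹ * (y_742 * (y_742 * z_742)) from eq_28 y_742⁻¹ y_742 z_742]
  conv_lhs => arg 1; arg 1; rw [show y_742⁻¹ * y_742 = 1 from eq_13 y_742]
  conv_lhs => arg 1; rw [show 1 * y_742 = y_742 from eq_9 y_742]

lemma eq_62 (y_5231 z_5231 : C) :
    ld y_5231⁻¹ (y_5231 * z_5231) = y_5231 * (y_5231 * z_5231) := by
  conv_lhs => arg 2; rw [← show y_5231⁻¹ * (y_5231 * (y_5231 * z_5231)) = y_5231 * z_5231 from eq_60 y_5231 z_5231]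
  conv_lhs => rw [show ld y_5231⁻¹ (y_5231⁻¹ * (y_5231 * (y_5231 * z_5231))) = y_5231 * (y_5231 * z_5231) from eq_16 y_5231⁻¹ (y_5231 * (y_5231 * z_5231))]

lemma eq_64 (y_5641 y_5642 : C) :
    ld y_5642⁻¹ y_5641 = y_5642 * y_5641 := by
  conv_lhs => arg 2; rw [← show y_5642 * (ld y_5642 y_5641) = y_5641 from eq_14 y_5642 y_5641]
  conv_lhs => rw [show ld y_5642⁻¹ (y_5642 * (ld y_5642 y_5641)) = y_5642 * (y_5642 * (ld y_5642 y_5641)) from eq_62 y_5642 (ld y_5642 y_5641)]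
  conv_lhs => arg 2; rw [show y_5642 * (ld y_5642 y_5641) = y_5641 from eq_14 y_5642 y_5641]

lemma eq_72 (x_5030 y_5029 : C) :
    y_5029 * (y_5029 * (x_5030 * (y_5029 * y_5029))⁻¹) = x_5030⁻¹ := by
  conv_lhs => rw [← show ld x_5030 (x_5030 * (y_5029 * (y_5029 * (x_5030 * (y_5029 * y_5029))⁻¹))) = y_5029 * (y_5029 * (x_5030 * (y_5029 * y_5029))⁻¹) from eq_16 x_5030 (y_5029 * (y_5029 * (x_5030 * (y_5029 * y_5029))⁻¹))]
  conv_lhs => arg 2; rw [show x_5030 * (y_5029 * (y_5029 * (x_5030 * (y_5029 * y_5029))⁻¹)) = 1 from eq_59 x_5030 y_5029]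
  conv_lhs => rw [show ld x_5030 1 = x_5030⁻¹ from eq_18 x_5030]

lemma eq_73 (x_7967 x_7968 : C) :
    ld x_7968 x_7967⁻¹ = x_7968 * (x_7967 * (x_7968 * x_7968))⁻¹ := by
  conv_lhs => arg 2; rw [← show x_7968 * (x_7968 * (x_7967 * (x_7968 * x_7968))⁻¹) = x_7967⁻¹ from eq_72 x_7967 x_7968]
  conv_lhs => rw [show ld x_7968 (x_7968 * (x_7968 * (x_7967 * (x_7968 * x_7968))⁻¹)) = x_7968 * (x_7967 * (x_7968 * x_7968))⁻¹ from eq_16 x_7968 (x_7968 * (x_7967 * (x_7968 * x_7968))⁻¹)]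

lemma eq_74 (x_7985 y_7986 : C) :
    (rd x_7985 (y_7986 * y_7986))⁻¹ = y_7986 * (y_7986 * x_7985⁻¹) := by
  conv_lhs => rw [← show y_7986 * (y_7986 * ((rd x_7985 (y_7986 * y_7986)) * (y_7986 * y_7986))⁻¹) = (rd x_7985 (y_7986 * y_7986))⁻¹ from eq_72 (rd x_7985 (y_7986 * y_7986)) y_7986]
  conv_lhs => arg 2; arg 2; arg 1; rw [show (rd x_7985 (y_7986 * y_7986)) * (y_7986 * y_7986) = x_7985 from eq_20 x_7985 (y_7986 * y_7986)]

lemma eq_76 (x_8105 y_8106 : C) :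
    (rd x_8105 y_8106)⁻¹ = y_8106 * (y_8106 * (x_8105 * y_8106)⁻¹) := by
  conv_lhs => rw [← show y_8106 * (y_8106 * ((rd x_8105 y_8106) * (y_8106 * y_8106))⁻¹) = (rd x_8105 y_8106)⁻¹ from eq_72 (rd x_8105 y_8106) y_8106]
  conv_lhs => arg 2; arg 2; arg 1; rw [show (rd x_8105 y_8106) * (y_8106 * y_8106) = x_8105 * y_8106 from eq_50 x_8105 y_8106]

lemma eq_78 (x_8491 y_8491 : C) :
    rd x_8491 (y_8491 * y_8491) = (y_8491 * (y_8491 * x_8491⁻¹))⁻¹ := by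
  conv_lhs => rw [← show (rd x_8491 (y_8491 * y_8491))⁻¹⁻¹ = rd x_8491 (y_8491 * y_8491) from eq_19 (rd x_8491 (y_8491 * y_8491))]
  conv_lhs => arg 1; rw [show (rd x_8491 (y_8491 * y_8491))⁻¹ = y_8491 * (y_8491 * x_8491⁻¹) from eq_74 x_8491 y_8491]

lemma eq_79 (x_9019 y_9019 : C) :
    rd x_9019 y_9019 = (y_9019 * (y_9019 * (x_9019 * y_9019)⁻¹))⁻¹ := by
  conv_lhs => rw [← show (rd x_9019 y_9019)⁻¹⁻¹ = rd x_9019 y_9019 from eq_19 (rd x_9019 y_9019)]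
  conv_lhs => arg 1; rw [show (rd x_9019 y_9019)⁻¹ = y_9019 * (y_9019 * (x_9019 * y_9019)⁻¹) from eq_76 x_9019 y_9019]

lemma eq_81 (x_9592 y_9591 : C) :
    (y_9591 * (y_9591 * x_9592⁻¹)) * x_9592 = y_9591 * y_9591 := by
  conv_lhs => rw [← show ld (y_9591 * (y_9591 * x_9592⁻¹))⁻¹ x_9592 = (y_9591 * (y_9591 * x_9592⁻¹)) * x_9592 from eq_64 x_9592 (y_9591 * (y_9591 * x_9592⁻¹))]
  conv_lhs => arg 1; rw [← show rd x_9592 (y_9591 * y_9591) = (y_9591 * (y_9591 * x_9592⁻¹))⁻¹ from eq_78 x_9592 y_9591]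
  conv_lhs => rw [show ld (rd x_9592 (y_9591 * y_9591)) x_9592 = y_9591 * y_9591 from eq_26 x_9592 (y_9591 * y_9591)]

lemma eq_88 (x_9708 y_9708 : C) :
    (y_9708 * (y_9708 * (x_9708 * y_9708)⁻¹))⁻¹ = (y_9708 * (y_9708 * x_9708⁻¹))⁻¹ * y_9708 := by
  conv_lhs => rw [← show rd x_9708 y_9708 = (y_9708 * (y_9708 * (x_9708 * y_9708)⁻¹))⁻¹ from eq_79 x_9708 y_9708]
  conv_lhs => rw [← show (rd x_9708 (y_9708 * y_9708)) * y_9708 = rd x_9708 y_9708 from eq_55 x_9708 y_9708]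
  conv_lhs => arg 1; rw [show rd x_9708 (y_9708 * y_9708) = (y_9708 * (y_9708 * x_9708⁻¹))⁻¹ from eq_78 x_9708 y_9708]

lemma eq_90 (x_9870 y_9870 : C) :
    (y_9870 * (y_9870 * (x_9870 * y_9870)⁻¹)) * x_9870 = y_9870 := by
  conv_lhs => rw [← show ld (y_9870 * (y_9870 * (x_9870 * y_9870)⁻¹))⁻¹ x_9870 = (y_9870 * (y_9870 * (x_9870 * y_9870)⁻¹)) * x_9870 from eq_64 x_9870 (y_9870 * (y_9870 * (x_9870 * y_9870)⁻¹))]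
  conv_lhs => arg 1; rw [← show rd x_9870 y_9870 = (y_9870 * (y_9870 * (x_9870 * y_9870)⁻¹))⁻¹ from eq_79 x_9870 y_9870]
  conv_lhs => rw [show ld (rd x_9870 y_9870) x_9870 = y_9870 from eq_26 x_9870 y_9870]

lemma eq_92 (y_13175 y_13176 : C) :
    (y_13176 * (y_13176 * y_13175⁻¹))⁻¹ * y_13176 = y_13175 * (y_13175 * (y_13176 * y_13175)⁻¹) := by
  conv_lhs => rw [← show (y_13176 * (y_13176 * (y_13175 * y_13176)⁻¹))⁻¹ = (y_13176 * (y_13176 * y_13175⁻¹))⁻¹ * y_13176 from eq_88 y_13175 y_13176]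
  conv_lhs => rw [← show rd y_13175 y_13176 = (y_13176 * (y_13176 * (y_13175 * y_13176)⁻¹))⁻¹ from eq_79 y_13175 y_13176]
  conv_lhs => arg 1; rw [← show (y_13175 * (y_13175 * (y_13176 * y_13175)⁻¹)) * y_13176 = y_13175 from eq_90 y_13176 y_13175]
  conv_lhs => rw [show rd ((y_13175 * (y_13175 * (y_13176 * y_13175)⁻¹)) * y_13176) y_13176 = y_13175 * (y_13175 * (y_13176 * y_13175)⁻¹) from eq_22 (y_13175 * (y_13175 * (y_13176 * y_13175)⁻¹)) y_13176]

lemma eq_98 (y_5661 z_5662 : C) :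
    ld y_5661 (y_5661⁻¹ * z_5662) = y_5661⁻¹ * (y_5661⁻¹ * z_5662) := by
  conv_lhs => arg 1; rw [← show y_5661⁻¹⁻¹ = y_5661 from eq_19 y_5661]
  conv_lhs => rw [show ld y_5661⁻¹⁻¹ (y_5661⁻¹ * z_5662) = y_5661⁻¹ * (y_5661⁻¹ * z_5662) from eq_62 y_5661⁻¹ z_5662]

lemma eq_99 (x_8143 y_8144 : C) :
    y_8144 * (x_8143 * (y_8144 * y_8144))⁻¹ = y_8144⁻¹ * x_8143⁻¹ := by
  conv_lhs => rw [← show y_8144⁻¹ * (y_8144 * (y_8144 * (x_8143 * (y_8144 * y_8144))⁻¹)) = y_8144 * (x_8143 * (y_8144 * y_8144))⁻¹ from eq_60 y_8144 (x_8143 * (y_8144 * y_8144))⁻¹]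
  conv_lhs => arg 2; rw [show y_8144 * (y_8144 * (x_8143 * (y_8144 * y_8144))⁻¹) = x_8143⁻¹ from eq_72 x_8143 y_8144]

lemma eq_100 (x_16454 y_16454 : C) :
    y_16454 * (y_16454⁻¹ * x_16454⁻¹) = x_16454⁻¹ := by
  conv_lhs => arg 2; rw [← show y_16454 * (x_16454 * (y_16454 * y_16454))⁻¹ = y_16454⁻¹ * x_16454⁻¹ from eq_99 x_16454 y_16454]
  conv_lhs => rw [show y_16454 * (y_16454 * (x_16454 * (y_16454 * y_16454))⁻¹) = x_16454⁻¹ from eq_72 x_16454 y_16454]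

lemma eq_101 (y_16605 y_16606 : C) :
    y_16606 * (y_16606⁻¹ * y_16605) = y_16605 := by
  conv_lhs => arg 2; arg 2; rw [← show y_16605⁻¹⁻¹ = y_16605 from eq_19 y_16605]
  conv_lhs => rw [show y_16606 * (y_16606⁻¹ * y_16605⁻¹⁻¹) = y_16605⁻¹⁻¹ from eq_100 y_16605⁻¹ y_16606]
  conv_lhs => rw [show y_16605⁻¹⁻¹ = y_16605 from eq_19 y_16605]

lemma eq_104 (y_15865 y_15866 : C) :
    ld y_15866 y_15865 = y_15866⁻¹ * y_15865 := by
  conv_lhs => arg 2; rw [← show y_15866⁻¹ * (ld y_15866⁻¹ y_15865) = y_15865 from eq_14 y_15866⁻¹ y_15865]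
  conv_lhs => rw [show ld y_15866 (y_15866⁻¹ * (ld y_15866⁻¹ y_15865)) = y_15866⁻¹ * (y_15866⁻¹ * (ld y_15866⁻¹ y_15865)) from eq_98 y_15866 (ld y_15866⁻¹ y_15865)]
  conv_lhs => arg 2; rw [show y_15866⁻¹ * (ld y_15866⁻¹ y_15865) = y_15865 from eq_14 y_15866⁻¹ y_15865]

lemma eq_108 (x_769 y_770 z_770 : C) :
    (x_769 * (x_769 * (y_770 * x_769)⁻¹)) * (y_770 * (y_770 * z_770)) = (x_769 * y_770) * z_770 := by
  conv_lhs => arg 1; rw [← show (y_770 * (y_770 * x_769⁻¹))⁻¹ * y_770 = x_769 * (x_769 * (y_770 * x_769)⁻¹) from eq_92 x_769 y_770]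
  conv_lhs => arg 1; rw [← show (y_770 * (y_770 * (x_769 * y_770)⁻¹))⁻¹ = (y_770 * (y_770 * x_769⁻¹))⁻¹ * y_770 from eq_88 x_769 y_770]
  conv_lhs => arg 1; rw [← show rd x_769 y_770 = (y_770 * (y_770 * (x_769 * y_770)⁻¹))⁻¹ from eq_79 x_769 y_770]
  conv_lhs => rw [← show (((rd x_769 y_770) * y_770) * y_770) * z_770 = (rd x_769 y_770) * (y_770 * (y_770 * z_770)) from eq_28 (rd x_769 y_770) y_770 z_770]
  conv_lhs => arg 1; arg 1; rw [show (rd x_769 y_770) * y_770 = x_769 from eq_20 x_769 y_770]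

lemma eq_112 (x_2390 y_2390 z_2390 : C) :
    (x_2390 * (y_2390 * y_2390)) * z_2390 = x_2390 * (y_2390 * (y_2390 * z_2390)) := by
  conv_lhs => arg 1; rw [← show (x_2390 * y_2390) * y_2390 = x_2390 * (y_2390 * y_2390) from eq_43 x_2390 y_2390]
  conv_lhs => rw [show ((x_2390 * y_2390) * y_2390) * z_2390 = x_2390 * (y_2390 * (y_2390 * z_2390)) from eq_28 x_2390 y_2390 z_2390]

lemma eq_122 (x_21265 y_21266 z_21266 : C) :
    (y_21266 * (y_21266 * x_21265⁻¹))⁻¹ * (y_21266 * (y_21266 * z_21266)) = x_21265 * z_21266 := by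
  conv_lhs => arg 1; rw [← show rd x_21265 (y_21266 * y_21266) = (y_21266 * (y_21266 * x_21265⁻¹))⁻¹ from eq_78 x_21265 y_21266]
  conv_lhs => rw [← show ((rd x_21265 (y_21266 * y_21266)) * (y_21266 * y_21266)) * z_21266 = (rd x_21265 (y_21266 * y_21266)) * (y_21266 * (y_21266 * z_21266)) from eq_112 (rd x_21265 (y_21266 * y_21266)) y_21266 z_21266]
  conv_lhs => arg 1; rw [show (rd x_21265 (y_21266 * y_21266)) * (y_21266 * y_21266) = x_21265 from eq_20 x_21265 (y_21266 * y_21266)]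

lemma eq_136 (x_25550 y_25550 : C) :
    x_25550 * (x_25550 * (y_25550 * x_25550)⁻¹) = x_25550 * y_25550⁻¹ := by
  conv_lhs => rw [← show (y_25550 * (y_25550 * x_25550⁻¹))⁻¹ * y_25550 = x_25550 * (x_25550 * (y_25550 * x_25550)⁻¹) from eq_92 x_25550 y_25550]
  conv_lhs => arg 2; rw [← show y_25550 * 1 = y_25550 from eq_10 y_25550]
  conv_lhs => arg 2; arg 2; rw [← show y_25550 * y_25550⁻¹ = 1 from eq_11 y_25550]
  conv_lhs => rw [show (y_25550 * (y_25550 * x_25550⁻¹))⁻¹ * (y_25550 * (y_25550 * y_25550⁻¹)) = x_25550 * y_25550⁻¹ from eq_122 x_25550 y_25550 y_25550⁻¹]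

lemma eq_137 (x_32584 y_32584 : C) :
    (y_32584 * x_32584⁻¹) * x_32584 = y_32584 := by
  conv_lhs => arg 1; rw [← show y_32584 * (y_32584 * (x_32584 * y_32584)⁻¹) = y_32584 * x_32584⁻¹ from eq_136 y_32584 x_32584]
  conv_lhs => rw [show (y_32584 * (y_32584 * (x_32584 * y_32584)⁻¹)) * x_32584 = y_32584 from eq_90 x_32584 y_32584]

lemma eq_143 (y_32949 y_32950 : C) :
    (y_32950 * (y_32950 * y_32949⁻¹))⁻¹ = y_32949 * (y_32950⁻¹ * y_32950⁻¹) := by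
  conv_lhs => rw [← show rd y_32949 (y_32950 * y_32950) = (y_32950 * (y_32950 * y_32949⁻¹))⁻¹ from eq_78 y_32949 y_32950]
  conv_lhs => arg 1; rw [← show (y_32949 * y_32950⁻¹) * y_32950 = y_32949 from eq_137 y_32950 y_32949]
  conv_lhs => rw [show rd ((y_32949 * y_32950⁻¹) * y_32950) (y_32950 * y_32950) = rd (y_32949 * y_32950⁻¹) y_32950 from eq_54 (y_32949 * y_32950⁻¹) y_32950]
  conv_lhs => rw [show rd (y_32949 * y_32950⁻¹) y_32950 = (y_32950 * (y_32950 * ((y_32949 * y_32950⁻¹) * y_32950)⁻¹))⁻¹ from eq_79 (y_32949 * y_32950⁻¹) y_32950]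
  conv_lhs => rw [show (y_32950 * (y_32950 * ((y_32949 * y_32950⁻¹) * y_32950)⁻¹))⁻¹ = (y_32950 * (y_32950 * (y_32949 * y_32950⁻¹)⁻¹))⁻¹ * y_32950 from eq_88 (y_32949 * y_32950⁻¹) y_32950]
  conv_lhs => rw [show (y_32950 * (y_32950 * (y_32949 * y_32950⁻¹)⁻¹))⁻¹ * y_32950 = (y_32949 * y_32950⁻¹) * ((y_32949 * y_32950⁻¹) * (y_32950 * (y_32949 * y_32950⁻¹))⁻¹) from eq_92 (y_32949 * y_32950⁻¹) y_32950]
  conv_lhs => rw [show (y_32949 * y_32950⁻¹) * ((y_32949 * y_32950⁻¹) * (y_32950 * (y_32949 * y_32950⁻¹))⁻¹) = (y_32949 * y_32950⁻¹) * y_32950⁻¹ from eq_136 (y_32949 * y_32950⁻¹) y_32950]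
  conv_lhs => rw [show (y_32949 * y_32950⁻¹) * y_32950⁻¹ = y_32949 * (y_32950⁻¹ * y_32950⁻¹) from eq_43 y_32949 y_32950⁻¹]

lemma eq_144 (x_32288 y_32287 : C) :
    x_32288 * (y_32287 * x_32288)⁻¹ = y_32287⁻¹ := by
  conv_lhs => rw [← show ld x_32288 (x_32288 * (x_32288 * (y_32287 * x_32288)⁻¹)) = x_32288 * (y_32287 * x_32288)⁻¹ from eq_16 x_32288 (x_32288 * (y_32287 * x_32288)⁻¹)]
  conv_lhs => arg 2; rw [show x_32288 * (x_32288 * (y_32287 * x_32288)⁻¹) = x_32288 * y_32287⁻¹ from eq_136 x_32288 y_32287]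
  conv_lhs => rw [show ld x_32288 (x_32288 * y_32287⁻¹) = y_32287⁻¹ from eq_16 x_32288 y_32287⁻¹]

lemma eq_145 (x_36480 y_36479 : C) :
    (y_36479 * x_36480)⁻¹ = x_36480⁻¹ * y_36479⁻¹ := by
  conv_lhs => rw [← show ld x_36480 (x_36480 * (y_36479 * x_36480)⁻¹) = (y_36479 * x_36480)⁻¹ from eq_16 x_36480 (y_36479 * x_36480)⁻¹]
  conv_lhs => arg 2; rw [show x_36480 * (y_36479 * x_36480)⁻¹ = y_36479⁻¹ from eq_144 x_36480 y_36479]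
  conv_lhs => rw [show ld x_36480 y_36479⁻¹ = x_36480 * (y_36479 * (x_36480 * x_36480))⁻¹ from eq_73 y_36479 x_36480]
  conv_lhs => rw [show x_36480 * (y_36479 * (x_36480 * x_36480))⁻¹ = x_36480⁻¹ * y_36479⁻¹ from eq_99 y_36479 x_36480]

lemma eq_164 (x_32656 y_32656 z_32656 : C) :
    (x_32656 * y_32656⁻¹) * (y_32656 * (y_32656 * z_32656)) = (x_32656 * y_32656) * z_32656 := by
  conv_lhs => arg 1; rw [← show x_32656 * (x_32656 * (y_32656 * x_32656)⁻¹) = x_32656 * y_32656⁻¹ from eq_136 x_32656 y_32656]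
  conv_lhs => rw [show (x_32656 * (x_32656 * (y_32656 * x_32656)⁻¹)) * (y_32656 * (y_32656 * z_32656)) = (x_32656 * y_32656) * z_32656 from eq_108 x_32656 y_32656 z_32656]

lemma eq_178 (x_48079 y_48079 z_48079 : C) :
    (y_48079 * x_48079⁻¹) * ((x_48079 * y_48079) * z_48079) = y_48079 * (y_48079 * z_48079) := by
  conv_lhs => arg 1; arg 1; rw [← show y_48079⁻¹⁻¹ = y_48079 from eq_19 y_48079]
  conv_lhs => arg 1; rw [← show (x_48079 * y_48079⁻¹)⁻¹ = y_48079⁻¹⁻¹ * x_48079⁻¹ from eq_145 y_48079⁻¹ x_48079]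
  conv_lhs => rw [← show ld (x_48079 * y_48079⁻¹) ((x_48079 * y_48079) * z_48079) = (x_48079 * y_48079⁻¹)⁻¹ * ((x_48079 * y_48079) * z_48079) from eq_104 ((x_48079 * y_48079) * z_48079) (x_48079 * y_48079⁻¹)]
  conv_lhs => arg 2; rw [← show (x_48079 * y_48079⁻¹) * (y_48079 * (y_48079 * z_48079)) = (x_48079 * y_48079) * z_48079 from eq_164 x_48079 y_48079 z_48079]
  conv_lhs => rw [show ld (x_48079 * y_48079⁻¹) ((x_48079 * y_48079⁻¹) * (y_48079 * (y_48079 * z_48079))) = y_48079 * (y_48079 * z_48079) from eq_16 (x_48079 * y_48079⁻¹) (y_48079 * (y_48079 * z_48079))]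

lemma eq_184 (x_57169 y_57170 z_57170 : C) :
    (y_57170 * (y_57170 * x_57169⁻¹)) * (x_57169 * z_57170) = y_57170 * (y_57170 * z_57170) := by
  conv_lhs => arg 1; arg 2; rw [← show y_57170 * (y_57170 * (x_57169 * y_57170)⁻¹) = y_57170 * x_57169⁻¹ from eq_136 y_57170 x_57169]
  conv_lhs => arg 1; arg 2; rw [← show (rd x_57169 y_57170)⁻¹ = y_57170 * (y_57170 * (x_57169 * y_57170)⁻¹) from eq_76 x_57169 y_57170]
  conv_lhs => arg 2; arg 1; rw [← show (rd x_57169 y_57170) * y_57170 = x_57169 from eq_20 x_57169 y_57170]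
  conv_lhs => rw [show (y_57170 * (rd x_57169 y_57170)⁻¹) * (((rd x_57169 y_57170) * y_57170) * z_57170) = y_57170 * (y_57170 * z_57170) from eq_178 (rd x_57169 y_57170) y_57170 z_57170]

lemma eq_192 (x_25591 y_25591 z_25591 : C) :
    (x_25591 * z_25591) * (z_25591⁻¹ * (y_25591⁻¹ * y_25591⁻¹)) = x_25591 * (y_25591⁻¹ * y_25591⁻¹) := by
  conv_lhs => arg 2; rw [← show (z_25591⁻¹ * y_25591⁻¹) * y_25591⁻¹ = z_25591⁻¹ * (y_25591⁻¹ * y_25591⁻¹) from eq_43 z_25591⁻¹ y_25591⁻¹]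
  conv_lhs => arg 2; arg 1; rw [← show (y_25591 * z_25591)⁻¹ = z_25591⁻¹ * y_25591⁻¹ from eq_145 z_25591 y_25591]
  conv_lhs => arg 2; rw [← show (y_25591 * (y_25591 * z_25591))⁻¹ = (y_25591 * z_25591)⁻¹ * y_25591⁻¹ from eq_145 (y_25591 * z_25591) y_25591]
  conv_lhs => rw [← show (x_25591 * z_25591) * ((x_25591 * z_25591) * ((y_25591 * (y_25591 * z_25591)) * (x_25591 * z_25591))⁻¹) = (x_25591 * z_25591) * (y_25591 * (y_25591 * z_25591))⁻¹ from eq_136 (x_25591 * z_25591) (y_25591 * (y_25591 * z_25591))]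
  conv_lhs => rw [← show ((y_25591 * (y_25591 * z_25591)) * ((y_25591 * (y_25591 * z_25591)) * (x_25591 * z_25591)⁻¹))⁻¹ * (y_25591 * (y_25591 * z_25591)) = (x_25591 * z_25591) * ((x_25591 * z_25591) * ((y_25591 * (y_25591 * z_25591)) * (x_25591 * z_25591))⁻¹) from eq_92 (x_25591 * z_25591) (y_25591 * (y_25591 * z_25591))]
  conv_lhs => rw [← show ((y_25591 * (y_25591 * z_25591)) * ((y_25591 * (y_25591 * z_25591)) * ((x_25591 * z_25591) * (y_25591 * (y_25591 * z_25591)))⁻¹))⁻¹ = ((y_25591 * (y_25591 * z_25591)) * ((y_25591 * (y_25591 * z_25591)) * (x_25591 * z_25591)⁻¹))⁻¹ * (y_25591 * (y_25591 * z_25591)) from eq_88 (x_25591 * z_25591) (y_25591 * (y_25591 * z_25591))]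
  conv_lhs => rw [← show rd (x_25591 * z_25591) (y_25591 * (y_25591 * z_25591)) = ((y_25591 * (y_25591 * z_25591)) * ((y_25591 * (y_25591 * z_25591)) * ((x_25591 * z_25591) * (y_25591 * (y_25591 * z_25591)))⁻¹))⁻¹ from eq_79 (x_25591 * z_25591) (y_25591 * (y_25591 * z_25591))]
  conv_lhs => arg 1; rw [← show (y_25591 * (y_25591 * x_25591⁻¹))⁻¹ * (y_25591 * (y_25591 * z_25591)) = x_25591 * z_25591 from eq_122 x_25591 y_25591 z_25591]
  conv_lhs => rw [show rd ((y_25591 * (y_25591 * x_25591⁻¹))⁻¹ * (y_25591 * (y_25591 * z_25591))) (y_25591 * (y_25591 * z_25591)) = (y_25591 * (y_25591 * x_25591⁻¹))⁻¹ from eq_22 (y_25591 * (y_25591 * x_25591⁻¹))⁻¹ (y_25591 * (y_25591 * z_25591))]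
  conv_lhs => rw [show (y_25591 * (y_25591 * x_25591⁻¹))⁻¹ = x_25591 * (y_25591⁻¹ * y_25591⁻¹) from eq_143 x_25591 y_25591]

lemma eq_292 (y_10445 y_10446 z_10446 : C) :
    (y_10445 * (y_10445 * y_10446)) * z_10446 = y_10445 * (y_10445 * (y_10446 * z_10446)) := by
  conv_lhs => arg 1; rw [← show (y_10445 * y_10445) * y_10446 = y_10445 * (y_10445 * y_10446) from eq_29 y_10445 y_10446]
  conv_lhs => arg 1; arg 1; rw [← show (y_10445 * (y_10445 * y_10446⁻¹)) * y_10446 = y_10445 * y_10445 from eq_81 y_10446 y_10445]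
  conv_lhs => rw [show (((y_10445 * (y_10445 * y_10446⁻¹)) * y_10446) * y_10446) * z_10446 = (y_10445 * (y_10445 * y_10446⁻¹)) * (y_10446 * (y_10446 * z_10446)) from eq_28 (y_10445 * (y_10445 * y_10446⁻¹)) y_10446 z_10446]
  conv_lhs => rw [show (y_10445 * (y_10445 * y_10446⁻¹)) * (y_10446 * (y_10446 * z_10446)) = y_10445 * (y_10445 * (y_10446 * z_10446)) from eq_184 y_10446 y_10445 (y_10446 * z_10446)]

lemma eq_379 (x_67022 y_67021 z_67022 : C) :
    (x_67022 * z_67022) * (z_67022⁻¹ * (y_67021 * y_67021)) = x_67022 * (y_67021 * y_67021) := by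
  conv_lhs => arg 2; arg 2; arg 2; rw [← show y_67021⁻¹⁻¹ = y_67021 from eq_19 y_67021]
  conv_lhs => arg 2; arg 2; arg 1; rw [← show y_67021⁻¹⁻¹ = y_67021 from eq_19 y_67021]
  conv_lhs => rw [show (x_67022 * z_67022) * (z_67022⁻¹ * (y_67021⁻¹⁻¹ * y_67021⁻¹⁻¹)) = x_67022 * (y_67021⁻¹⁻¹ * y_67021⁻¹⁻¹) from eq_192 x_67022 y_67021⁻¹ z_67022]
  conv_lhs => arg 2; arg 1; rw [show y_67021⁻¹⁻¹ = y_67021 from eq_19 y_67021]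
  conv_lhs => arg 2; arg 2; rw [show y_67021⁻¹⁻¹ = y_67021 from eq_19 y_67021]

lemma eq_392 (x_290400 y_290399 y_290400 : C) :
    (x_290400 * y_290400) * (y_290399 * y_290399) = x_290400 * (y_290400 * (y_290399 * y_290399)) := by
  conv_lhs => rw [← show ((x_290400 * y_290400) * y_290400) * (y_290400⁻¹ * (y_290399 * y_290399)) = (x_290400 * y_290400) * (y_290399 * y_290399) from eq_379 (x_290400 * y_290400) y_290399 y_290400]
  conv_lhs => rw [show ((x_290400 * y_290400) * y_290400) * (y_290400⁻¹ * (y_290399 * y_290399)) = x_290400 * (y_290400 * (y_290400 * (y_290400⁻¹ * (y_290399 * y_290399)))) from eq_28 x_290400 y_290400 (y_290400⁻¹ * (y_290399 * y_290399))]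
  conv_lhs => arg 2; arg 2; rw [show y_290400 * (y_290400⁻¹ * (y_290399 * y_290399)) = y_290399 * y_290399 from eq_101 (y_290399 * y_290399) y_290400]

lemma sq_left_nuc (va vb vk : C) :
    (vk * vk) * (va * vb) = ((vk * vk) * va) * vb := by
  conv_lhs => rw [show (vk * vk) * (va * vb) = vk * (vk * (va * vb)) from eq_29 vk (va * vb)]
  conv_lhs => rw [← show (vk * (vk * va)) * vb = vk * (vk * (va * vb)) from eq_292 vk va vb]
  conv_lhs => arg 1; rw [← show (vk * vk) * va = vk * (vk * va) from eq_29 vk va]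

lemma sq_right_nuc (va vb vk : C) :
    (va * vb) * (vk * vk) = va * (vb * (vk * vk)) := by
  conv_lhs => rw [show (va * vb) * (vk * vk) = va * (vb * (vk * vk)) from eq_392 va vk vb]

-- ===== manual part (inside namespace CL) =====

lemma lcancel (a : C) {u v : C} (h : a * u = a * v) : u = v :=
  (MulLoop.mulLeft_bijective a).injective h
lemma rcancel (a : C) {u v : C} (h : u * a = v * a) : u = v :=
  (MulLoop.mulRight_bijective a).injective h

lemma LCb (y z : C) : y * (y * z) = (y * y) * z := by
  have h := claw 1 y z
  rw [one_mul', one_mul'] at h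
  exact h

lemma RCb (x y : C) : (x * y) * y = x * (y * y) := by
  have h := claw x y 1
  rw [mul_one', mul_one'] at h
  exact h.symm

lemma midn (x y z : C) : x * ((y * y) * z) = (x * (y * y)) * z := by
  have h := claw x y z
  rw [LCb y z, RCb x y] at h
  exact h

lemma lip (x w : C) : x⁻¹ * (x * w) = w := by
  have h := claw x⁻¹ x (ld x w)
  rw [inv_mul', one_mul', mul_ld] at h
  exact h

lemma rip (w x : C) : (w * x) * x⁻¹ = w := by
  have h := claw (rd w x) x x⁻¹
  rw [mul_inv', mul_one', rd_mul] at h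
  exact h.symm

lemma aaip (x y : C) : (x * y)⁻¹ = y⁻¹ * x⁻¹ := by
  have h1 : (x * y)⁻¹ * x = y⁻¹ := by
    have h := lip (x * y) y⁻¹
    rw [rip x y] at h
    exact h
  have h2 := rip ((x * y)⁻¹) x
  rw [h1] at h2
  exact h2.symm

lemma nuc_def {a : C} (h : a ∈ nucleus C) :
    ∀ x y : C, a * x * y = a * (x * y) ∧ x * a * y = x * (a * y) ∧
      x * y * a = x * (y * a) := h

lemma nL {a : C} (h : a ∈ nucleus C) (x y : C) : (a * x) * y = a * (x * y) :=
  (nuc_def h x y).1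
lemma nM {a : C} (h : a ∈ nucleus C) (x y : C) : (x * a) * y = x * (a * y) :=
  (nuc_def h x y).2.1
lemma nR {a : C} (h : a ∈ nucleus C) (x y : C) : (x * y) * a = x * (y * a) :=
  (nuc_def h x y).2.2

lemma one_nuc : (1 : C) ∈ nucleus C := fun x y =>
  ⟨by rw [one_mul', one_mul'], by rw [mul_one', one_mul'], by rw [mul_one', mul_one']⟩

lemma sq_nuc (k : C) : (k * k) ∈ nucleus C := fun x y =>
  ⟨(sq_left_nuc x y k).symm, (midn x k y).symm, sq_right_nuc x y k⟩

section Central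

lemma hsq (c : C) (hc1 : c ≠ 1) (hN : nucleus C = {1, c}) (w : C) : w * w = 1 ∨ w * w = c := by
  have h := sq_nuc w
  rw [hN] at h
  simpa using h

lemma hcN (c : C) (hc1 : c ≠ 1) (hN : nucleus C = {1, c}) : c ∈ nucleus C := by rw [hN]; simp

lemma hcc (c : C) (hc1 : c ≠ 1) (hN : nucleus C = {1, c}) : c * c = 1 := by
  rcases hsq c hc1 hN c with h | h
  · exact h
  · exact absurd (lcancel c (h.trans (mul_one' c).symm)) hc1

lemma Nc_nuc (c : C) (hc1 : c ≠ 1) (hN : nucleus C = {1, c}) {σ : C} (h : σ = 1 ∨ σ = c) : σ ∈ nucleus C := by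
  rcases h with rfl | rfl
  · exact one_nuc
  · exact hcN _ hc1 hN

lemma Nc_sq (c : C) (hc1 : c ≠ 1) (hN : nucleus C = {1, c}) {σ : C} (h : σ = 1 ∨ σ = c) : σ * σ = 1 := by
  rcases h with rfl | rfl
  · exact mul_one' 1
  · exact hcc _ hc1 hN

lemma Nc_mul (c : C) (hc1 : c ≠ 1) (hN : nucleus C = {1, c}) {σ τ : C} (h1 : σ = 1 ∨ σ = c) (h2 : τ = 1 ∨ τ = c) :
    σ * τ = 1 ∨ σ * τ = c := by
  rcases h1 with rfl | rfl <;> rcases h2 with rfl | rfl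
  · left; exact mul_one' 1
  · right; exact one_mul' _
  · right; exact mul_one' _
  · left; exact hcc _ hc1 hN

lemma winv (c : C) (hc1 : c ≠ 1) (hN : nucleus C = {1, c}) (w : C) : w⁻¹ = w * (w * w) := by
  apply lcancel w
  rw [LCb w (w * w), Nc_sq c hc1 hN (hsq c hc1 hN w), mul_inv']

lemma cinv (c : C) (hc1 : c ≠ 1) (hN : nucleus C = {1, c}) : c⁻¹ = c := by
  apply lcancel c
  rw [mul_inv', hcc c hc1 hN]

lemma hcent (c : C) (hc1 : c ≠ 1) (hN : nucleus C = {1, c}) (x : C) : c * x = x * c := by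
  have hu := hsq c hc1 hN (x * c)
  have hs := hsq c hc1 hN x
  have hU : ((x*c)*(x*c)) ∈ nucleus C := sq_nuc (x*c)
  have hS : (x*x) ∈ nucleus C := sq_nuc x
  -- G1 : c * x⁻¹ = (x*c) * ((x*c)*(x*c))
  have G1 : c * x⁻¹ = (x*c) * ((x*c)*(x*c)) := by
    calc c * x⁻¹ = c⁻¹ * x⁻¹ := by rw [cinv c hc1 hN]
      _ = (x * c)⁻¹ := (aaip x c).symm
      _ = (x*c) * ((x*c)*(x*c)) := winv c hc1 hN (x*c)
  -- rewrite LHS : c * x⁻¹ = (c*x)*(x*x)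
  have G1' : (c*x)*(x*x) = (x*c) * ((x*c)*(x*c)) := by
    rw [← G1, winv c hc1 hN x]
    exact nR hS c x
  have key : c * x = (x*c) * (((x*c)*(x*c)) * (x*x)) := by
    calc c * x = (c*x) * 1 := (mul_one' _).symm
      _ = (c*x) * ((x*x)*(x*x)) := by rw [Nc_sq c hc1 hN hs]
      _ = ((c*x) * (x*x)) * (x*x) := (nM hS (c*x) (x*x)).symm
      _ = ((x*c) * ((x*c)*(x*c))) * (x*x) := by rw [G1']
      _ = (x*c) * (((x*c)*(x*c)) * (x*x)) := nM hU (x*c) (x*x)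
  rcases Nc_mul c hc1 hN hu hs with h | h
  · rw [h, mul_one'] at key
    exact key
  · rw [h] at key
    have : c * x = x := by
      rw [key, nR (hcN c hc1 hN) x c, hcc c hc1 hN, mul_one']
    exact absurd (rcancel x (this.trans (one_mul' x).symm)) hc1

lemma Nc_comm (c : C) (hc1 : c ≠ 1) (hN : nucleus C = {1, c}) {σ : C} (h : σ = 1 ∨ σ = c) (x : C) : σ * x = x * σ := by
  rcases h with rfl | rfl
  · rw [one_mul', mul_one']
  · exact hcent _ hc1 hN x

lemma flex_of (c : C) (hc1 : c ≠ 1) (hN : nucleus C = {1, c}) (x y : C) : x * (y * x) = (x * y) * x := by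
  have hS : (y*y) ∈ nucleus C := sq_nuc y
  have hT : (x*x) ∈ nucleus C := sq_nuc x
  have hW : ((x*y)*(x*y)) ∈ nucleus C := sq_nuc (x*y)
  have hst : (y*y)*(x*x) = 1 ∨ (y*y)*(x*x) = c :=
    Nc_mul c hc1 hN (hsq c hc1 hN y) (hsq c hc1 hN x)
  have hST : ((y*y)*(x*x)) ∈ nucleus C := Nc_nuc c hc1 hN hst
  have hn : ((x*y)*(x*y)) * ((y*y)*(x*x)) = 1 ∨ ((x*y)*(x*y)) * ((y*y)*(x*x)) = c :=
    Nc_mul c hc1 hN (hsq c hc1 hN (x*y)) hst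
  have hNn : (((x*y)*(x*y)) * ((y*y)*(x*x))) ∈ nucleus C := Nc_nuc c hc1 hN hn
  -- h1 : y⁻¹ * x⁻¹ = (y*x) * ((y*y)*(x*x))
  have h1 : y⁻¹ * x⁻¹ = (y*x) * ((y*y)*(x*x)) := by
    calc y⁻¹ * x⁻¹ = (y*(y*y)) * (x*(x*x)) := by rw [winv c hc1 hN y, winv c hc1 hN x]
      _ = ((y*(y*y)) * x) * (x*x) := (nR hT (y*(y*y)) x).symm
      _ = (y*((y*y)*x)) * (x*x) := by rw [nM hS y x]
      _ = (y*(x*(y*y))) * (x*x) := by rw [Nc_comm c hc1 hN (hsq c hc1 hN y) x]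
      _ = ((y*x)*(y*y)) * (x*x) := by rw [nR hS y x]
      _ = (y*x) * ((y*y)*(x*x)) := nM hS (y*x) (x*x)
  have h2 : y⁻¹ * x⁻¹ = (x*y) * ((x*y)*(x*y)) := by
    rw [← aaip x y]
    exact winv c hc1 hN (x*y)
  have h3 : (y*x) * ((y*y)*(x*x)) = (x*y) * ((x*y)*(x*y)) := h1.symm.trans h2
  have h4 : y * x = (x*y) * (((x*y)*(x*y)) * ((y*y)*(x*x))) := by
    calc y * x = (y*x) * 1 := (mul_one' _).symm
      _ = (y*x) * (((y*y)*(x*x)) * ((y*y)*(x*x))) := by rw [Nc_sq c hc1 hN hst]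
      _ = ((y*x) * ((y*y)*(x*x))) * ((y*y)*(x*x)) := (nM hST (y*x) _).symm
      _ = ((x*y) * ((x*y)*(x*y))) * ((y*y)*(x*x)) := by rw [h3]
      _ = (x*y) * (((x*y)*(x*y)) * ((y*y)*(x*x))) := nM hW (x*y) _
  have h5 : x * y = (y*x) * (((x*y)*(x*y)) * ((y*y)*(x*x))) := by
    calc x * y = ((x*y) * (((x*y)*(x*y)) * ((y*y)*(x*x)))) * (((x*y)*(x*y)) * ((y*y)*(x*x))) := by
          rw [nM hNn (x*y) _, Nc_sq c hc1 hN hn, mul_one']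
      _ = (y*x) * (((x*y)*(x*y)) * ((y*y)*(x*x))) := by rw [← h4]
  have sideA : x * (y * x) = ((x*x) * y) * (((x*y)*(x*y)) * ((y*y)*(x*x))) := by
    calc x * (y * x)
        = x * ((x*y) * (((x*y)*(x*y)) * ((y*y)*(x*x)))) := by rw [← h4]
      _ = (x * (x*y)) * (((x*y)*(x*y)) * ((y*y)*(x*x))) := (nR hNn x (x*y)).symm
      _ = ((x*x) * y) * (((x*y)*(x*y)) * ((y*y)*(x*x))) := by rw [LCb x y]
  have sideB : (x * y) * x = ((x*x) * y) * (((x*y)*(x*y)) * ((y*y)*(x*x))) := by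
    calc (x * y) * x
        = ((y*x) * (((x*y)*(x*y)) * ((y*y)*(x*x)))) * x := by rw [← h5]
      _ = (y*x) * ((((x*y)*(x*y)) * ((y*y)*(x*x))) * x) := nM hNn (y*x) x
      _ = (y*x) * (x * (((x*y)*(x*y)) * ((y*y)*(x*x)))) := by
            rw [Nc_comm c hc1 hN hn x]
      _ = ((y*x) * x) * (((x*y)*(x*y)) * ((y*y)*(x*x))) := (nR hNn (y*x) x).symm
      _ = (y * (x*x)) * (((x*y)*(x*y)) * ((y*y)*(x*x))) := by rw [RCb y x]
      _ = ((x*x) * y) * (((x*y)*(x*y)) * ((y*y)*(x*x))) := by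
            rw [← Nc_comm c hc1 hN (hsq c hc1 hN x) y]
  exact sideA.trans sideB.symm

end Central


end CL

/-- A C-loop whose nucleus has exactly 2 elements is flexible. -/
theorem stmt11 {C : Type} [CLoop C]
    (hnuc : (nucleus C).ncard = 2) :
    ∀ x y : C, x * (y * x) = (x * y) * x := by
  obtain ⟨p, q, hpq, hs⟩ := Set.ncard_eq_two.mp hnuc
  have h1 : (1 : C) ∈ nucleus C := CL.one_nuc
  rw [hs] at h1
  rw [Set.mem_insert_iff, Set.mem_singleton_iff] at h1
  rcases h1 with h | h
  · -- p = 1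
    have hN : nucleus C = {1, q} := by rw [hs, ← h]
    have hq1 : q ≠ 1 := fun e => hpq (h.symm.trans e.symm)
    exact fun x y => CL.flex_of q hq1 hN x y
  · have hN : nucleus C = {1, p} := by rw [hs, ← h, Set.pair_comm]
    have hp1 : p ≠ 1 := fun e => hpq (e.trans h)
    exact fun x y => CL.flex_of p hp1 hN x y
end

section
/- Let Q be a Steiner loop, K an abelian group (additive), and (id,f) a C-factor set with f : Q × Q → K. Then the C-loop C = K ×_id^f Q (multiplication (a,x)*(b,y) = (a+b+f(x,y), xy)) is flexible if and only if 2·f(x,y) = 2·f(y,x) for all x,y ∈ Q. -/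
/-- The central C-loop extension `C = K ×_id^f Q` (`Q` Steiner, `K` abelian,
`(id,f)` a C-factor set) is flexible iff `2f(x,y) = 2f(y,x)` for all `x,y`. -/
theorem stmt12 {Q : Type} [SteinerLoop Q] {K : Type} [AddCommGroup K]
    (f : Q → Q → K)
    (hf1 : ∀ x : Q, f x 1 = 0 ∧ f 1 x = 0)
    (hf2 : ∀ x y z : Q, f y z + f y (y * z) = f x y + f (x * y) y)
    (m : K × Q → K × Q → K × Q)
    (hm : ∀ p q : K × Q, m p q = (p.1 + q.1 + f p.2 q.2, p.2 * q.2)) :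
    (∀ p q : K × Q, m p (m q p) = m (m p q) p)
    ↔ ∀ x y : Q, f x y + f x y = f y x + f y x := by
  have comm : ∀ x y : Q, x * y = y * x := SteinerLoop.comm
  have A : ∀ y z : Q, f y z + f y (y * z) = f y y := by
    intro y z
    have h := hf2 1 y z
    rwa [(hf1 y).2, MulLoop.one_mul, zero_add] at h
  have B : ∀ x y : Q, f x y + f (x * y) y = f y y := by
    intro x y
    have h := (hf2 x y 1).symm
    rwa [(hf1 y).1, MulLoop.mul_one, zero_add] at h
  have fA : ∀ x y : Q, f x (x * y) = f x x - f x y := by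
    intro x y
    exact eq_sub_of_add_eq' (A x y)
  have fB : ∀ x y : Q, f (x * y) x = f x x - f y x := by
    intro x y
    have h := eq_sub_of_add_eq' (B y x)
    rwa [comm y x] at h
  constructor
  · intro h x y
    have h0 := h (0, x) (0, y)
    simp only [hm, Prod.mk.injEq] at h0
    have h1 := h0.1
    rw [comm y x, fA, fB] at h1
    -- h1 : 0 + (0 + 0 + f y x) + (f x x - f x y) = 0 + 0 + f x y + 0 + (f x x - f y x)
    have h2 : f y x - f x y = f x y - f y x := by
      have e1 : (0:K) + (0 + 0 + f y x) + (f x x - f x y)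
          = (f y x - f x y) + f x x := by abel
      have e2 : (0:K) + 0 + f x y + 0 + (f x x - f y x)
          = (f x y - f y x) + f x x := by abel
      rw [e1, e2] at h1
      exact add_right_cancel h1
    exact (sub_eq_sub_iff_add_eq_add.mp h2).symm
  · intro h p q
    obtain ⟨a, x⟩ := p
    obtain ⟨b, y⟩ := q
    simp only [hm, Prod.mk.injEq]
    constructor
    · rw [comm y x, fA, fB]
      have key : f x y - f y x = f y x - f x y :=
        sub_eq_sub_iff_add_eq_add.mpr (h x y)
      calc a + (b + a + f y x) + (f x x - f x y)
          = (a + b + a + f x x) + (f y x - f x y) := by abel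
        _ = (a + b + a + f x x) + (f x y - f y x) := by rw [← key]
        _ = a + b + f x y + a + (f x x - f y x) := by abel
    · rw [comm y x, comm (x * y) x]
end

section
/- Let Q be a Steiner loop with |Q| > 2 and K an abelian group that is not elementary abelian of exponent 2. Then there exists a nonflexible C-loop C of order |Q|·|K| whose nucleus N(C) is isomorphic to K, with C/N(C) isomorphic to Q, and moreover N(C) = Z(C). -/
section Aux

/-- cyclic orientation induced by a linear order -/
def cyc {Q : Type} [LinearOrder Q] (x y z : Q) : Prop :=
  (x < y ∧ y < z) ∨ (y < z ∧ z < x) ∨ (z < x ∧ x < y)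

lemma cyc_rot {Q : Type} [LinearOrder Q] (x y z : Q) : cyc x y z ↔ cyc y z x := by
  unfold cyc; tauto

lemma cyc_xor {Q : Type} [LinearOrder Q] {x y z : Q} (hxy : x ≠ y) (hyz : y ≠ z)
    (hxz : x ≠ z) : cyc x y z ↔ ¬ cyc x z y := by
  rcases lt_trichotomy x y with h1 | h1 | h1 <;>
  rcases lt_trichotomy y z with h2 | h2 | h2 <;>
  rcases lt_trichotomy x z with h3 | h3 | h3 <;>
    first
      | exact absurd h1 hxy
      | exact absurd h2 hyz
      | exact absurd h3 hxz
      | exact absurd (h1.trans h2) (lt_asymm h3)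
      | exact absurd (h2.trans h1) (lt_asymm h3)
      | (have n1 := lt_asymm h1; have n2 := lt_asymm h2; have n3 := lt_asymm h3;
         unfold cyc; tauto)

variable {Q : Type} [SteinerLoop Q] [LinearOrder Q]

lemma st_mulmul (x y : Q) : x * y * y = x := by
  rw [SteinerLoop.comm (x*y) y, SteinerLoop.comm x y]
  exact SteinerLoop.cancel y x

lemma st_ne {x y : Q} (hx : x ≠ 1) (hy : y ≠ 1) (hxy : x ≠ y) :
    x*y ≠ 1 ∧ x*y ≠ x ∧ x*y ≠ y := by
  refine ⟨fun h => ?_, fun h => ?_, fun h => ?_⟩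
  · have h2 := SteinerLoop.cancel x y
    rw [h, MulLoop.mul_one] at h2
    exact hxy h2
  · have h2 := SteinerLoop.cancel x y
    rw [h, SteinerLoop.sq] at h2
    exact hy h2.symm
  · have h2 := st_mulmul x y
    rw [h, SteinerLoop.sq] at h2
    exact hx h2.symm

open Classical in
/-- the factor-set exponent -/
noncomputable def phi (x y : Q) : ℕ :=
  if x = 1 ∨ y = 1 then 0 else if x = y then 1 else if cyc x y (x*y) then 1 else 0

lemma phi_one_left (y : Q) : phi 1 y = 0 := by simp [phi]

lemma phi_one_right (x : Q) : phi x 1 = 0 := by simp [phi]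

lemma phi_diag {x : Q} (hx : x ≠ 1) : phi x x = 1 := by
  unfold phi
  rw [if_neg (by tauto), if_pos rfl]

open Classical in
lemma phi_eq {x y : Q} (hx : x ≠ 1) (hy : y ≠ 1) (hxy : x ≠ y) :
    phi x y = if cyc x y (x*y) then 1 else 0 := by
  unfold phi
  rw [if_neg (by tauto), if_neg hxy]

lemma phi_le_one (x y : Q) : phi x y ≤ 1 := by
  unfold phi
  split
  · omega
  · split
    · omega
    · split <;> omega

lemma phi_row {x : Q} (hx : x ≠ 1) (z : Q) : phi x z + phi x (x*z) = 1 := by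
  by_cases hz : z = 1
  · subst hz
    rw [phi_one_right, MulLoop.mul_one, phi_diag hx]
  by_cases hzx : z = x
  · rw [hzx, phi_diag hx, SteinerLoop.sq, phi_one_right]
  · have hne := st_ne hx hz (fun h => hzx h.symm)
    rw [phi_eq hx hz (fun h => hzx h.symm), phi_eq hx hne.1 (Ne.symm hne.2.1),
      SteinerLoop.cancel]
    have h := cyc_xor (x := x) (y := z) (z := x*z) (fun h => hzx h.symm)
      (Ne.symm hne.2.2) (Ne.symm hne.2.1)
    by_cases hc : cyc x z (x*z)
    · rw [if_pos hc, if_neg (h.mp hc)]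
    · rw [if_neg hc, if_pos (not_not.mp (fun hnn => hc (h.mpr hnn)))]

lemma phi_col {y : Q} (hy : y ≠ 1) (x : Q) : phi x y + phi (x*y) y = 1 := by
  by_cases hx : x = 1
  · subst hx
    rw [phi_one_left, MulLoop.one_mul, phi_diag hy]
  by_cases hxy : x = y
  · rw [hxy, phi_diag hy, SteinerLoop.sq, phi_one_left]
  · have hne := st_ne hx hy hxy
    rw [phi_eq hx hy hxy, phi_eq hne.1 hy hne.2.2, st_mulmul]
    have h : cyc (x*y) y x ↔ ¬ cyc x y (x*y) :=
      (cyc_rot _ _ _).trans ((cyc_rot _ _ _).trans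
        (cyc_xor (Ne.symm hne.2.1) hne.2.2 hxy))
    by_cases hc : cyc x y (x*y)
    · rw [if_pos hc, if_neg (fun hnn => (h.mp hnn) hc)]
    · rw [if_neg hc, if_pos (h.mpr hc)]

lemma phi_anti {x y : Q} (hx : x ≠ 1) (hy : y ≠ 1) (hxy : x ≠ y) :
    phi x y + phi y x = 1 := by
  have hne := st_ne hx hy hxy
  rw [phi_eq hx hy hxy, phi_eq hy hx (Ne.symm hxy), SteinerLoop.comm y x]
  have h : cyc y x (x*y) ↔ ¬ cyc x y (x*y) :=
    (cyc_rot _ _ _).trans (cyc_xor (Ne.symm hne.2.1) hne.2.2 hxy)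
  by_cases hc : cyc x y (x*y)
  · rw [if_pos hc, if_neg (fun hnn => (h.mp hnn) hc)]
  · rw [if_neg hc, if_pos (h.mpr hc)]

lemma phi_rot {x y : Q} (hx : x ≠ 1) (hy : y ≠ 1) (hxy : x ≠ y) :
    phi (x*y) x = phi x y := by
  have hne := st_ne hx hy hxy
  have h2 : (x*y)*x = y := by
    rw [SteinerLoop.comm (x*y) x]
    exact SteinerLoop.cancel x y
  rw [phi_eq hne.1 hx hne.2.1, phi_eq hx hy hxy, h2]
  have h : cyc (x*y) x y ↔ cyc x y (x*y) := cyc_rot _ _ _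
  by_cases hc : cyc x y (x*y)
  · rw [if_pos hc, if_pos (h.mpr hc)]
  · rw [if_neg hc, if_neg (fun hnn => hc (h.mp hnn))]

end Aux

/-- For any Steiner loop `Q` with `|Q| > 2` and any abelian group `K` that is not
an elementary abelian 2-group, there is a nonflexible C-loop structure on `K × Q`
(hence of order `|K|·|Q|`) whose nucleus is `K × {1} ≅ K`, equals the center,
and whose quotient by the nucleus is `Q` (the second projection is a loop
homomorphism with kernel the nucleus). -/
theorem stmt14 {Q : Type} [SteinerLoop Q] {K : Type} [CommGroup K]
    (hQ : ∃ u v : Q, u ≠ 1 ∧ v ≠ 1 ∧ u ≠ v)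
    (hK : ∃ a : K, a * a ≠ 1) :
    ∃ m : K × Q → K × Q → K × Q,
      (∀ p : K × Q, m (1, 1) p = p ∧ m p (1, 1) = p) ∧
      (∀ p : K × Q, Function.Bijective (m p) ∧ Function.Bijective fun q => m q p) ∧
      (∀ u v w : K × Q, m u (m v (m v w)) = m (m (m u v) v) w) ∧
      (¬ ∀ p q : K × Q, m p (m q p) = m (m p q) p) ∧
      mnucleus m = {p : K × Q | p.2 = 1} ∧
      mcenter m = mnucleus m ∧
      (∀ a b : K, m (a, 1) (b, 1) = (a * b, 1)) ∧
      (∀ p q : K × Q, (m p q).2 = p.2 * q.2) := by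
  classical
  obtain ⟨a, ha⟩ := hK
  obtain ⟨u, v, hu1, hv1, huv⟩ := hQ
  letI : LinearOrder Q := IsWellOrder.linearOrder WellOrderingRel
  have key : ∀ t s : ℕ, t + s = 1 → a ^ (t + t) ≠ a ^ (s + s) := by
    intro t s hts h
    rcases (by omega : t = 0 ∧ s = 1 ∨ t = 1 ∧ s = 0) with ⟨rfl, rfl⟩ | ⟨rfl, rfl⟩
    · simp [pow_succ] at h
      exact ha h.symm
    · simp [pow_succ] at h
      exact ha h
  have hnuc : mnucleus (fun p q : K × Q => (p.1 * q.1 * a ^ phi p.2 q.2, p.2 * q.2))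
      = {p : K × Q | p.2 = 1} := by
    ext ⟨c, x⟩
    simp only [mnucleus, Set.mem_setOf_eq]
    constructor
    · intro hmem
      by_contra hx
      set y : Q := if x = u then v else u with hy
      have hy1 : y ≠ 1 := by
        rw [hy]; split <;> assumption
      have hyx : y ≠ x := by
        rw [hy]; split
        · rename_i h; rw [h]; exact Ne.symm huv
        · rename_i h; exact fun hh => h hh.symm
      have h := (hmem (1, y) (1, x)).1
      have h1 := congrArg Prod.fst h
      simp only [one_mul, mul_one] at h1
      rw [SteinerLoop.comm y x] at h1
      simp only [mul_assoc] at h1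
      have h2 := mul_left_cancel h1
      rw [← pow_add, ← pow_add] at h2
      rw [phi_rot hx hy1 (Ne.symm hyx)] at h2
      have hA := phi_anti hx hy1 (Ne.symm hyx)
      have hB := phi_row hx y
      have h3 : phi y x + phi x (x * y) = phi y x + phi y x := by omega
      rw [h3] at h2
      exact key _ _ (by omega) h2
    · intro hx
      have hx1 : x = 1 := hx
      subst hx1
      rintro ⟨l, y⟩ ⟨n, z⟩
      refine ⟨?_, ?_, ?_⟩ <;>
        simp only [Prod.mk.injEq, phi_one_left, phi_one_right, MulLoop.one_mul,
          MulLoop.mul_one, pow_zero, mul_one] <;>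
        constructor <;>
        first
          | rfl
          | (simp [mul_comm, mul_left_comm, mul_assoc])
  refine ⟨fun p q => (p.1 * q.1 * a ^ phi p.2 q.2, p.2 * q.2), ?_, ?_, ?_, ?_, hnuc, ?_, ?_, ?_⟩
  · rintro ⟨k, x⟩
    constructor <;>
      simp [phi_one_left, phi_one_right, MulLoop.one_mul, MulLoop.mul_one]
  · rintro ⟨k, x⟩
    constructor
    · rw [Function.bijective_iff_has_inverse]
      refine ⟨fun r => (k⁻¹ * r.1 * (a ^ phi x (x * r.2))⁻¹, x * r.2), ?_, ?_⟩
      · rintro ⟨l, y⟩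
        dsimp only
        rw [SteinerLoop.cancel x y]
        simp [mul_comm, mul_left_comm, mul_assoc]
      · rintro ⟨c, z⟩
        dsimp only
        rw [SteinerLoop.cancel x z]
        simp [mul_comm, mul_left_comm, mul_assoc]
    · rw [Function.bijective_iff_has_inverse]
      refine ⟨fun r => (k⁻¹ * r.1 * (a ^ phi (r.2 * x) x)⁻¹, r.2 * x), ?_, ?_⟩
      · rintro ⟨l, y⟩
        dsimp only
        rw [st_mulmul y x]
        simp [mul_comm, mul_left_comm, mul_assoc]
      · rintro ⟨c, z⟩
        dsimp only
        rw [st_mulmul z x]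
        simp [mul_comm, mul_left_comm, mul_assoc]
  · rintro ⟨k1, x⟩ ⟨k2, y⟩ ⟨k3, z⟩
    dsimp only
    rw [SteinerLoop.cancel y z, st_mulmul x y]
    have hE : phi y z + phi y (y*z) = phi x y + phi (x*y) y := by
      by_cases hy : y = 1
      · subst hy
        simp [phi_one_left, phi_one_right]
      · rw [phi_row hy z, phi_col hy x]
    simp only [Prod.mk.injEq]
    refine ⟨?_, trivial⟩
    simp only [mul_comm, mul_left_comm, mul_assoc, ← pow_add]
    rw [hE]
  · intro hflex
    have h := hflex (1, u) (1, v)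
    have h1 := congrArg Prod.fst h
    simp only [one_mul, mul_one] at h1
    rw [SteinerLoop.comm v u] at h1
    rw [← pow_add, ← pow_add, phi_rot hu1 hv1 huv] at h1
    have hA := phi_anti hu1 hv1 huv
    have hB := phi_row hu1 v
    have h3 : phi v u + phi u (u * v) = phi v u + phi v u := by omega
    rw [h3] at h1
    exact key _ _ (by omega) h1
  · apply Set.Subset.antisymm
    · intro p hp
      exact hp.1
    · intro p hp
      refine ⟨hp, ?_⟩
      obtain ⟨c, x⟩ := p
      have hx : x = 1 := by rw [hnuc] at hp; exact hp
      subst hx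
      rintro ⟨l, y⟩
      simp [phi_one_left, phi_one_right, MulLoop.one_mul, MulLoop.mul_one, mul_comm]
  · intro b c
    simp [phi_one_left, MulLoop.one_mul]
  · intro p q
    rfl
end

section
/- Let Q = {1,u,v,w} be the Klein four-group (a Steiner loop), K an abelian group, and a ∈ K an element of order at least 3. Let f : Q × Q → K be given by f(v,u) = −a, f(v,w) = a, f(w,u) = a, f(w,w) = a, and f = 0 on all other pairs. Then f satisfies the central C-factor set conditions f(y,z)+f(y,yz) = f(x,y)+f(xy,y), and the central extension C = K ×_id^f Q is a nonflexible C-loop whose nucleus and center both equal K × {1}. -/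
/-- The Klein four-group `{1,u,v,w}`, realized additively as `ZMod 2 × ZMod 2`
with `u = (1,0)`, `v = (0,1)`, `w = (1,1)`. -/
abbrev Klein : Type := ZMod 2 × ZMod 2

/-- The block map `B₃(a)`: `f(v,u) = -a`, `f(v,w) = a`, `f(w,u) = a`,
`f(w,w) = a`, and `f = 0` elsewhere. -/
def B3 {K : Type} [AddCommGroup K] (a : K) (x y : Klein) : K :=
  if x = ((0 : ZMod 2), (1 : ZMod 2)) ∧ y = ((1 : ZMod 2), (0 : ZMod 2)) then -a
  else if x = ((0 : ZMod 2), (1 : ZMod 2)) ∧ y = ((1 : ZMod 2), (1 : ZMod 2)) then a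
  else if x = ((1 : ZMod 2), (1 : ZMod 2)) ∧ y = ((1 : ZMod 2), (0 : ZMod 2)) then a
  else if x = ((1 : ZMod 2), (1 : ZMod 2)) ∧ y = ((1 : ZMod 2), (1 : ZMod 2)) then a
  else 0

lemma klein_cases : ∀ x : Klein,
    x = ((0 : ZMod 2), (0 : ZMod 2)) ∨ x = ((1 : ZMod 2), (0 : ZMod 2)) ∨
    x = ((0 : ZMod 2), (1 : ZMod 2)) ∨ x = ((1 : ZMod 2), (1 : ZMod 2)) := by decide

lemma klein_self (x : Klein) : x + x = 0 := by
  rcases klein_cases x with rfl | rfl | rfl | rfl <;> decide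

lemma B3_zero_left {K : Type} [AddCommGroup K] (a : K) (y : Klein) :
    B3 a 0 y = 0 := by simp (config := { decide := true }) [B3]

lemma B3_zero_right {K : Type} [AddCommGroup K] (a : K) (y : Klein) :
    B3 a y 0 = 0 := by
  rcases klein_cases y with rfl | rfl | rfl | rfl <;>
    simp (config := { decide := true }) [B3]

/-- For the Klein four-group `Q`, an abelian group `K` and `a ∈ K` of order at
least 3, the map `f = B₃(a)` satisfies the central C-factor set condition, and
the central extension `C = K ×_id^f Q` is a nonflexible C-loop whose nucleus and
center both equal `K × {1}`. -/
theorem stmt15 {K : Type} [AddCommGroup K] (a : K)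
    (ha : a ≠ 0 ∧ a + a ≠ 0)
    (m : K × Klein → K × Klein → K × Klein)
    (hm : ∀ p q : K × Klein, m p q = (p.1 + q.1 + B3 a p.2 q.2, p.2 + q.2)) :
    (∀ x y z : Klein,
        B3 a y z + B3 a y (y + z) = B3 a x y + B3 a (x + y) y) ∧
    (∀ p : K × Klein, m (0, 0) p = p ∧ m p (0, 0) = p) ∧
    (∀ p : K × Klein, Function.Bijective (m p) ∧ Function.Bijective fun q => m q p) ∧
    (∀ u v w : K × Klein, m u (m v (m v w)) = m (m (m u v) v) w) ∧
    (¬ ∀ p q : K × Klein, m p (m q p) = m (m p q) p) ∧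
    mnucleus m = {p : K × Klein | p.2 = 0} ∧
    mcenter m = mnucleus m := by
  have h1 : ∀ x y z : Klein,
      B3 a y z + B3 a y (y + z) = B3 a x y + B3 a (x + y) y := by
    intro x y z
    rcases klein_cases x with rfl | rfl | rfl | rfl <;>
      rcases klein_cases y with rfl | rfl | rfl | rfl <;>
        rcases klein_cases z with rfl | rfl | rfl | rfl <;>
          simp (config := { decide := true }) [B3] <;> abel
  have h6 : mnucleus m = {p : K × Klein | p.2 = 0} := by
    apply Set.eq_of_subset_of_subset
    · rintro ⟨k, x⟩ hp
      simp only [Set.mem_setOf_eq]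
      rcases klein_cases x with rfl | rfl | rfl | rfl
      · rfl
      · exfalso
        have h := (hp ((0 : K), ((0:ZMod 2),(1:ZMod 2))) ((0 : K), ((1:ZMod 2),(0:ZMod 2)))).1
        rw [hm, hm, hm, hm] at h
        simp only [Prod.ext_iff] at h
        obtain ⟨h, -⟩ := h
        simp (config := { decide := true }) [B3] at h
        exact ha.2 (eq_neg_iff_add_eq_zero.mp h)
      · exfalso
        have h := (hp ((0 : K), ((1:ZMod 2),(1:ZMod 2))) ((0 : K), ((1:ZMod 2),(1:ZMod 2)))).2.1
        rw [hm, hm, hm, hm] at h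
        simp only [Prod.ext_iff] at h
        obtain ⟨h, -⟩ := h
        simp (config := { decide := true }) [B3] at h
        rw [add_assoc] at h
        exact ha.2 (left_eq_add.mp h)
      · exfalso
        have h := (hp ((0 : K), ((1:ZMod 2),(1:ZMod 2))) ((0 : K), ((1:ZMod 2),(0:ZMod 2)))).2.2
        rw [hm, hm, hm, hm] at h
        simp only [Prod.ext_iff] at h
        obtain ⟨h, -⟩ := h
        simp (config := { decide := true }) [B3] at h
        have h' : k + (a + a) = a + k + a := by abel
        rw [h] at h'
        exact ha.2 (add_eq_left.mp h')
    · rintro ⟨k, x⟩ hp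
      simp only [Set.mem_setOf_eq] at hp
      subst hp
      intro q r
      refine ⟨?_, ?_, ?_⟩ <;>
        simp [hm, Prod.ext_iff, B3_zero_left, B3_zero_right] <;> abel
  refine ⟨h1, ?_, ?_, ?_, ?_, h6, ?_⟩
  · intro p
    constructor <;> simp [hm, Prod.ext_iff, B3_zero_left, B3_zero_right]
  · intro p
    constructor
    · apply Function.bijective_iff_has_inverse.mpr
      refine ⟨fun q => (q.1 - p.1 - B3 a p.2 (p.2 + q.2), p.2 + q.2), ?_, ?_⟩ <;>
        intro q <;>
        simp [hm, Prod.ext_iff, ← add_assoc, klein_self] <;> abel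
    · apply Function.bijective_iff_has_inverse.mpr
      refine ⟨fun q => (q.1 - p.1 - B3 a (q.2 + p.2) p.2, q.2 + p.2), ?_, ?_⟩ <;>
        intro q <;>
        simp [hm, Prod.ext_iff, add_assoc, klein_self] <;> abel
  · rintro ⟨u1, u2⟩ ⟨v1, v2⟩ ⟨w1, w2⟩
    simp only [hm, Prod.mk.injEq]
    constructor
    · rw [show v2 + (v2 + w2) = w2 from by rw [← add_assoc, klein_self, zero_add],
          show u2 + v2 + v2 = u2 from by rw [add_assoc, klein_self, add_zero]]
      have key := h1 u2 v2 w2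
      rw [← sub_eq_zero] at key ⊢
      rw [← key]
      abel
    · abel
  · intro hflex
    have h := hflex ((0 : K), ((0:ZMod 2),(1:ZMod 2))) ((0 : K), ((1:ZMod 2),(0:ZMod 2)))
    rw [hm, hm, hm, hm] at h
    simp only [Prod.ext_iff] at h
    obtain ⟨h, -⟩ := h
    simp (config := { decide := true }) [B3] at h
    exact ha.2 (eq_neg_iff_add_eq_zero.mp h)
  · apply Set.eq_of_subset_of_subset
    · rintro p ⟨hn, -⟩; exact hn
    · intro p hn
      refine ⟨hn, ?_⟩
      have hp2 : p.2 = 0 := by rw [h6] at hn; exact hn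
      intro q
      simp [hm, Prod.ext_iff, hp2, B3_zero_left, B3_zero_right] <;> abel
end

section
/- For every integer n > 2 there exists a nonflexible C-loop C containing elements x, y, z whose associator [x,y,z] = ((xy)z)^{-1}·(x·(yz)) has order exactly n; moreover C can be taken of order 4n if n is odd, and 8n if n is even. -/
/-- Right-associated powers in a magma with unit: `t⁰ = 1`, `t^(k+1) = t^k * t`. -/
def powR {L : Type*} [Mul L] [One L] (t : L) : ℕ → L
  | 0 => 1
  | k + 1 => powR t k * t

/-!
The loop is a central extension `ZMod m ×_f V₄` of the Klein four-group. In a central extension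
the C-law reduces to an identity for the factor set `f` alone, checked here by finite computation,
and the associator `[x, y, z]` is the central element `f(q,r) + f(p,q+r) - f(p,q) - f(p+q,r)` built
from the `V₄`-components `p, q, r`. For `x = z = (0, w)` and `y = (0, u)` it equals `-2`, whose
additive order is `n` in `ZMod n` for odd `n` and in `ZMod (2n)` for even `n`. Since `z = x`, the
same nontrivial associator shows that the loop is not flexible.
-/

@[ext]
structure CentralExt (K Q : Type*) (f : Q → Q → K) where
  fst : K
  snd : Q

/-- `c_identity` is the C-law `x(y·yz) = (xy·y)z` of `CentralExt K Q f` read off in the central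
coordinate; `map_neg_comm` makes `(a, p)⁻¹ = (-a - f p (-p), -p)` a two-sided inverse. -/
structure IsCFactorSet {K Q : Type*} [AddCommGroup K] [AddGroup Q] (f : Q → Q → K) : Prop where
  map_zero_left : ∀ q, f 0 q = 0
  map_zero_right : ∀ q, f q 0 = 0
  map_neg_comm : ∀ p, f (-p) p = f p (-p)
  c_identity : ∀ p q r,
    f q r + f q (q + r) + f p (q + (q + r)) = f p q + f (p + q) q + f (p + q + q) r

lemma IsCFactorSet.map {K L Q : Type*} [AddCommGroup K] [AddCommGroup L] [AddGroup Q]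
    {f : Q → Q → K} (hf : IsCFactorSet f) (φ : K →+ L) : IsCFactorSet fun p q => φ (f p q) where
  map_zero_left q := by rw [hf.map_zero_left, map_zero]
  map_zero_right q := by rw [hf.map_zero_right, map_zero]
  map_neg_comm p := by rw [hf.map_neg_comm]
  c_identity p q r := by simp only [← map_add, hf.c_identity]

namespace CentralExt

def equivProd {K Q : Type*} {f : Q → Q → K} : CentralExt K Q f ≃ K × Q where
  toFun x := (x.fst, x.snd)
  invFun p := ⟨p.1, p.2⟩

lemma natCard {K Q : Type*} {f : Q → Q → K} :
    Nat.card (CentralExt K Q f) = Nat.card K * Nat.card Q := by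
  rw [Nat.card_congr equivProd, Nat.card_prod]

variable {K Q : Type*} [AddCommGroup K] [AddGroup Q] {f : Q → Q → K}

instance : Mul (CentralExt K Q f) := ⟨fun x y => ⟨x.fst + y.fst + f x.snd y.snd, x.snd + y.snd⟩⟩

instance : One (CentralExt K Q f) := ⟨⟨0, 0⟩⟩

instance : Inv (CentralExt K Q f) := ⟨fun x => ⟨-x.fst - f x.snd (-x.snd), -x.snd⟩⟩

@[simp] lemma fst_mul (x y : CentralExt K Q f) : (x * y).fst = x.fst + y.fst + f x.snd y.snd := rfl
@[simp] lemma snd_mul (x y : CentralExt K Q f) : (x * y).snd = x.snd + y.snd := rfl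
@[simp] lemma fst_one : (1 : CentralExt K Q f).fst = 0 := rfl
@[simp] lemma snd_one : (1 : CentralExt K Q f).snd = 0 := rfl
@[simp] lemma fst_inv (x : CentralExt K Q f) : x⁻¹.fst = -x.fst - f x.snd (-x.snd) := rfl
@[simp] lemma snd_inv (x : CentralExt K Q f) : x⁻¹.snd = -x.snd := rfl

lemma mulLeft_bijective (a : CentralExt K Q f) :
    Function.Bijective fun x : CentralExt K Q f => a * x := by
  refine Function.bijective_iff_has_inverse.2
    ⟨fun y => ⟨y.fst - a.fst - f a.snd (-a.snd + y.snd), -a.snd + y.snd⟩, fun x => ?_, fun x => ?_⟩ <;>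
  ext <;> simp only [fst_mul, snd_mul, neg_add_cancel_left, add_neg_cancel_left] <;> abel

lemma mulRight_bijective (a : CentralExt K Q f) :
    Function.Bijective fun x : CentralExt K Q f => x * a := by
  refine Function.bijective_iff_has_inverse.2
    ⟨fun y => ⟨y.fst - a.fst - f (y.snd - a.snd) a.snd, y.snd - a.snd⟩, fun x => ?_, fun x => ?_⟩ <;>
  ext <;> simp only [fst_mul, snd_mul, add_sub_cancel_right, sub_add_cancel] <;> abel

abbrev cLoop (hf : IsCFactorSet f) : CLoop (CentralExt K Q f) where
  one_mul x := by ext <;> simp [hf.map_zero_left]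
  mul_one x := by ext <;> simp [hf.map_zero_right]
  mulLeft_bijective := mulLeft_bijective
  mulRight_bijective := mulRight_bijective
  mul_inv x := by
    ext
    · simp only [fst_mul, fst_inv, snd_inv, fst_one]
      abel
    · exact add_neg_cancel x.snd
  inv_mul x := by
    ext
    · simp only [fst_mul, fst_inv, snd_inv, fst_one, hf.map_neg_comm]
      abel
    · exact neg_add_cancel x.snd
  c_law x y z := by
    ext
    · simp only [fst_mul, snd_mul]
      linear_combination (norm := module) hf.c_identity x.snd y.snd z.snd
    · simp only [snd_mul, add_assoc]

lemma associator_eq (hf : IsCFactorSet f) (x y z : CentralExt K Q f) :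
    ((x * y) * z)⁻¹ * (x * (y * z)) =
      ⟨f y.snd z.snd + f x.snd (y.snd + z.snd) - f x.snd y.snd - f (x.snd + y.snd) z.snd, 0⟩ := by
  ext
  · simp only [fst_mul, fst_inv, snd_mul, snd_inv, ← add_assoc, hf.map_neg_comm]
    abel
  · simp [add_assoc]

lemma powR_mk_zero (hf : IsCFactorSet f) (c : K) (k : ℕ) :
    powR (⟨c, 0⟩ : CentralExt K Q f) k = ⟨k • c, 0⟩ := by
  induction k with
  | zero => ext <;> simp [powR]
  | succ k ih => ext <;> simp [powR, ih, hf.map_zero_left, succ_nsmul]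

lemma powR_mk_zero_eq_one_iff (hf : IsCFactorSet f) (c : K) (k : ℕ) :
    powR (⟨c, 0⟩ : CentralExt K Q f) k = 1 ↔ addOrderOf c ∣ k := by
  rw [powR_mk_zero hf, addOrderOf_dvd_iff_nsmul_eq_zero, CentralExt.ext_iff]
  simp

end CentralExt

/-- On the Klein four-group `{0, u, v, w}` with `u = (1,0)`, `v = (0,1)`, `w = (1,1)`:
`f(v,u) = -1`, `f(v,w) = f(w,u) = f(w,w) = 1`, and `f = 0` otherwise. -/
def kleinFactorSet (p q : ZMod 2 × ZMod 2) : ℤ :=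
  if (p, q) = ((0, 1), (1, 0)) then -1
  else if (p, q) ∈ [((0, 1), (1, 1)), ((1, 1), (1, 0)), ((1, 1), (1, 1))] then 1
  else 0

lemma isCFactorSet_kleinFactorSet : IsCFactorSet kleinFactorSet :=
  ⟨by decide, by decide, by decide, by decide⟩

lemma addOrderOf_two_zmod (m : ℕ) : addOrderOf (2 : ZMod m) = m / m.gcd 2 := by
  simpa using ZMod.addOrderOf_coe' m two_ne_zero

theorem exists_nonflexible_cLoop_associator_addOrderOf (m n : ℕ) (hn : n ≠ 1)
    (h2 : addOrderOf (2 : ZMod m) = n) :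
    ∃ (C : Type) (_ : CLoop C),
      (¬ ∀ x y : C, x * (y * x) = (x * y) * x) ∧
      (∃ x y z : C,
        powR (((x * y) * z)⁻¹ * (x * (y * z))) n = 1 ∧
        ∀ k : ℕ, 0 < k → k < n → powR (((x * y) * z)⁻¹ * (x * (y * z))) k ≠ 1) ∧
      Nat.card C = 4 * m := by
  let f p q := Int.castAddHom (ZMod m) (kleinFactorSet p q)
  have hf : IsCFactorSet f := isCFactorSet_kleinFactorSet.map _
  let x : CentralExt (ZMod m) (ZMod 2 × ZMod 2) f := ⟨0, (1, 1)⟩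
  let y : CentralExt (ZMod m) (ZMod 2 × ZMod 2) f := ⟨0, (1, 0)⟩
  have hδ : kleinFactorSet (1, 0) (1, 1) + kleinFactorSet (1, 1) ((1, 0) + (1, 1))
      - kleinFactorSet (1, 1) (1, 0) - kleinFactorSet ((1, 1) + (1, 0)) (1, 1) = -2 := by
    decide
  have hassoc : ((x * y) * x)⁻¹ * (x * (y * x)) = ⟨-2, 0⟩ := by
    rw [CentralExt.associator_eq hf]
    refine CentralExt.ext ?_ rfl
    simp only [f, x, y, ← map_add, ← map_sub, hδ]
    simp
  have hpow (k : ℕ) : powR (((x * y) * x)⁻¹ * (x * (y * x))) k = 1 ↔ n ∣ k := by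
    rw [hassoc, CentralExt.powR_mk_zero_eq_one_iff hf, addOrderOf_neg, h2]
  refine ⟨_, CentralExt.cLoop hf, fun hflex => hn ?_,
    ⟨x, y, x, (hpow n).2 dvd_rfl, fun k hk hkn hpowk => ?_⟩, ?_⟩
  · refine Nat.dvd_one.1 ((hpow 1).1 ?_)
    rw [hflex x y, (CentralExt.cLoop hf).inv_mul]
    exact (CentralExt.cLoop hf).one_mul 1
  · exact absurd (Nat.le_of_dvd hk ((hpow k).1 hpowk)) (not_le.2 hkn)
  · rw [CentralExt.natCard, Nat.card_zmod, Nat.card_prod, Nat.card_zmod, mul_comm]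

/-- For every `n > 2` there is a nonflexible C-loop containing an associator
`[x,y,z] = ((xy)z)⁻¹ (x(yz))` of order exactly `n`; moreover the loop can be
taken of order `4n` when `n` is odd and `8n` when `n` is even. -/
theorem stmt16 : ∀ n : ℕ, 2 < n →
    ∃ (C : Type) (_ : CLoop C),
      (¬ ∀ x y : C, x * (y * x) = (x * y) * x) ∧
      (∃ x y z : C,
        powR (((x * y) * z)⁻¹ * (x * (y * z))) n = 1 ∧
        ∀ k : ℕ, 0 < k → k < n → powR (((x * y) * z)⁻¹ * (x * (y * z))) k ≠ 1) ∧
      (Odd n → Nat.card C = 4 * n) ∧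
      (Even n → Nat.card C = 8 * n) := by
  intro n hn
  rcases Nat.even_or_odd n with hev | hodd
  · have h2 : addOrderOf (2 : ZMod (2 * n)) = n := by
      rw [addOrderOf_two_zmod, Nat.gcd_mul_right_left]
      omega
    obtain ⟨C, hC, hflex, hassoc, hcard⟩ :=
      exists_nonflexible_cLoop_associator_addOrderOf (2 * n) n (by omega) h2
    exact ⟨C, hC, hflex, hassoc, fun hodd => absurd hev (Nat.not_even_iff_odd.2 hodd),
      fun _ => by rw [hcard]; ring⟩
  · have h2 : addOrderOf (2 : ZMod n) = n := by
      rw [addOrderOf_two_zmod, hodd.coprime_two_right, Nat.div_one]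
    obtain ⟨C, hC, hflex, hassoc, hcard⟩ :=
      exists_nonflexible_cLoop_associator_addOrderOf n n (by omega) h2
    exact ⟨C, hC, hflex, hassoc, fun _ => hcard,
      fun hev => absurd hodd (Nat.not_odd_iff_even.2 hev)⟩
end

section
/- Let L be a set with a multiplication making it a loop, such that: L contains a central element −1 of order 2 with (−1)x = x(−1), x·x ∈ {1,−1} for all x, and L satisfies the left alternative law x(xy) = (x·x)y, the right alternative law (xy)y = x(y·y), and the flexible law (xy)x = x(yx). Then L is a C-loop, i.e., x(y·(yz)) = ((xy)·y)z holds for all x,y,z ∈ L. -/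
/-- A loop containing a central element `ε = -1` of order 2 such that every
square is `1` or `ε`, satisfying the left and right alternative laws and the
flexible law, is a C-loop. -/
theorem stmt18 {L : Type} [MulLoop L] (ε : L)
    (hcen : ε ∈ loopCenter L)
    (hord2 : ε * ε = 1) (hne : ε ≠ 1)
    (hsq : ∀ x : L, x * x = 1 ∨ x * x = ε)
    (lalt : ∀ x y : L, x * (x * y) = (x * x) * y)
    (ralt : ∀ x y : L, (x * y) * y = x * (y * y))
    (flex : ∀ x y : L, (x * y) * x = x * (y * x)) :
    ∀ x y z : L, x * (y * (y * z)) = ((x * y) * y) * z := by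
  intro x y z
  rw [lalt, ralt]
  rcases hsq y with h | h <;> rw [h]
  · rw [MulLoop.one_mul, MulLoop.mul_one]
  · exact ((hcen.1 x z).2.1).symm
end

section
/- Suppose {d_1,…,d_n} is a basis of an algebra D over F with quadratic form N_D, satisfying: d_1 = 1; conj(d_i) = −d_i for i > 1; d_i d_j ∈ ±{d_1,…,d_n}; d_i d_i = −1 for i > 1; d_i d_j = −d_j d_i for 1 < i < j; conj(d_i d_j) = conj(d_j)·conj(d_i) and conj(conj(d_i)) = d_i; and the alternative/flexible identities d_i(d_i d_j) = (d_i d_i)d_j, d_i(d_j d_j) = (d_i d_j)d_j, (d_i d_j)d_i = d_i(d_j d_i). Let (C,N_C) be the standard doubling of (D,N_D) and set c_i = (d_i,0), c_{i+n} = (0,d_i). Then {c_1,…,c_{2n}} is a basis of C satisfying the same seven properties (with 2n in place of n). -/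
/-!
The conjugation `x ↦ ⟨x, 1⟩ • 1 - x` is linear, and since `d₁ = 1` is fixed by `conj ∘ conj` it is
fixed by `conj`: `conj 1 = s • 1` with `s² = 1`, and `s = -1` would give `-1 = conj (1 * 1) = 1`.
Hence every `dᵢ` is a signed unit: `conj dᵢ = dᵢ, dᵢ² = 1` or `conj dᵢ = -dᵢ, dᵢ² = -1`, so that
`conj dᵢ · dᵢ = 1`. The doubled conjugation is `(x, y) ↦ (conj x, -y)`, and the doubled product of
two vectors of the shapes `(x, 0)`, `(0, y)` is again of one of these shapes; so each property of
the `cᵢ` reduces, up to signs, to the corresponding property of the `dᵢ` and `conj dᵢ · dᵢ = 1`.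
-/

open QuadraticMap

namespace CayleyDickson

section Conjugation

variable {F D : Type*} [Field F] [NonAssocRing D] [Module F D] (N : QuadraticForm F D)

def normConj : D →ₗ[F] D where
  toFun x := polar N x 1 • (1 : D) - x
  map_add' x y := by rw [polar_add_left, add_smul]; abel
  map_smul' a x := by rw [polar_smul_left, smul_eq_mul, mul_smul, RingHom.id_apply, smul_sub]

theorem normConj_apply (x : D) : normConj N x = polar N x 1 • (1 : D) - x := rfl

theorem normConj_one (hD : (1 : D) ≠ 0)
    (hmul : normConj N (1 * 1) = normConj N 1 * normConj N 1)
    (hinv : normConj N (normConj N 1) = 1) : normConj N 1 = 1 := by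
  set s := polar N 1 1 - 1
  have hs : normConj N 1 = s • 1 := by rw [normConj_apply, sub_smul, one_smul]
  have hss : s * s = 1 := by
    rw [hs, map_smul, hs, smul_smul] at hinv
    have : (s * s - 1) • (1 : D) = 0 := by rw [sub_smul, hinv, one_smul, sub_self]
    exact sub_eq_zero.1 ((smul_eq_zero.1 this).resolve_right hD)
  rcases mul_self_eq_one_iff.1 hss with h | h
  · rw [hs, h, one_smul]
  · rw [one_mul, hs, h, neg_one_smul, neg_mul_neg, one_mul] at hmul
    rw [hs, h, neg_one_smul, hmul]

theorem doubledNorm_conj_eq {NC : D × D → F} (hNC : ∀ p, NC p = N p.1 + N p.2) (p : D × D) :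
    (NC (p + (1, 0)) - NC p - NC (1, 0)) • ((1 : D), (0 : D)) - p = (normConj N p.1, -p.2) := by
  simp only [hNC, Prod.fst_add, Prod.snd_add, add_zero, map_zero, normConj_apply, polar]
  ext <;> simp

end Conjugation

section SignedUnit

variable {D : Type*} [NonAssocRing D]

def IsSignedUnit (σ : D → D) (x : D) : Prop :=
  σ x = x ∧ x * x = 1 ∨ σ x = -x ∧ x * x = -1

namespace IsSignedUnit

section

variable {σ : D → D} {x y : D} (hx : IsSignedUnit σ x)
include hx

theorem conj_eq_or : σ x = x ∨ σ x = -x := hx.imp And.left And.left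

theorem conj_mul_self : σ x * x = 1 := by
  rcases hx with ⟨hσ, hxx⟩ | ⟨hσ, hxx⟩ <;> simp [hσ, hxx]

theorem conj_mul_mul_cancel (h : x * (x * y) = (x * x) * y) : σ x * (x * y) = y := by
  rcases hx with ⟨hσ, hxx⟩ | ⟨hσ, hxx⟩ <;> simp [hσ, h, hxx]

theorem mul_conj_mul_cancel (h : x * (x * y) = (x * x) * y) : x * (σ x * y) = y := by
  rcases hx with ⟨hσ, hxx⟩ | ⟨hσ, hxx⟩ <;> simp [hσ, h, hxx]

theorem mul_conj_mul_cancel_right (h : y * (x * x) = (y * x) * x) : (y * σ x) * x = y := by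
  rcases hx with ⟨hσ, hxx⟩ | ⟨hσ, hxx⟩ <;> simp [hσ, ← h, hxx]

theorem mul_mul_conj_comm : (y * x) * σ x = (y * σ x) * x := by
  rcases hx.conj_eq_or with hσ | hσ <;> simp [hσ]

end

variable {G : Type*} [FunLike G D D] [AddMonoidHomClass G D D] {σ : G} {x y : D}
  (hx : IsSignedUnit σ x)
include hx

theorem conj_conj : σ (σ x) = x := by
  rcases hx.conj_eq_or with hσ | hσ <;> simp [hσ]

theorem conj_conj_mul (h : σ (x * y) = σ y * σ x) : σ (σ x * y) = σ y * x := by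
  rcases hx.conj_eq_or with hσ | hσ <;> simp [hσ, h]

theorem conj_mul_conj (h : σ (y * x) = σ x * σ y) : σ (y * σ x) = x * σ y := by
  rcases hx.conj_eq_or with hσ | hσ <;> simp [hσ, h]

end IsSignedUnit

end SignedUnit

section Doubling

variable {D : Type*} [NonAssocRing D]

def mul (σ : D → D) (p q : D × D) : D × D :=
  (p.1 * q.1 - σ q.2 * p.2, q.2 * p.1 + p.2 * σ q.1)

def conj (σ : D → D) (p : D × D) : D × D := (σ p.1, -p.2)

@[simp] theorem conj_mk (σ : D → D) (x y : D) : conj σ (x, y) = (σ x, -y) := rfl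

variable {G : Type*} [FunLike G D D] [AddMonoidHomClass G D D] (σ : G) (x y : D)

@[simp] theorem mul_mk_zero_mk_zero : mul σ (x, 0) (y, 0) = (x * y, 0) := by simp [mul]

@[simp] theorem mul_mk_zero_zero_mk : mul σ (x, 0) (0, y) = (0, y * x) := by simp [mul]

@[simp] theorem mul_zero_mk_mk_zero : mul σ (0, x) (y, 0) = (0, x * σ y) := by simp [mul]

@[simp] theorem mul_zero_mk_zero_mk : mul σ (0, x) (0, y) = (-(σ y * x), 0) := by simp [mul]

end Doubling

section Family

variable {n : ℕ}

theorem forall_fin_two_mul {P : Fin (2 * n) → Prop} :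
    (∀ i, P i) ↔ (∀ k : Fin n, P ⟨k, by omega⟩) ∧ ∀ k : Fin n, P ⟨n + k, by omega⟩ := by
  refine ⟨fun h => ⟨fun _ => h _, fun _ => h _⟩, fun ⟨hl, hr⟩ i => ?_⟩
  by_cases hi : i.1 < n
  · exact hl ⟨i, hi⟩
  · convert hr ⟨i - n, by omega⟩
    show (i : ℕ) = n + (i - n)
    omega

theorem forall₂_fin_two_mul {P : Fin (2 * n) → Fin (2 * n) → Prop} :
    (∀ i j, P i j) ↔
      (∀ k l : Fin n, P ⟨k, by omega⟩ ⟨l, by omega⟩) ∧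
      (∀ k l : Fin n, P ⟨k, by omega⟩ ⟨n + l, by omega⟩) ∧
      (∀ k l : Fin n, P ⟨n + k, by omega⟩ ⟨l, by omega⟩) ∧
      ∀ k l : Fin n, P ⟨n + k, by omega⟩ ⟨n + l, by omega⟩ := by
  rw [forall_fin_two_mul (P := fun i => ∀ j, P i j)]
  simp only [forall_fin_two_mul (P := P _), forall_and, and_assoc]

variable {M : Type*} [Zero M] (b : Fin n → M)

def doubledFamily (i : Fin (2 * n)) : M × M :=
  if h : i.1 < n then (b ⟨i.1, h⟩, 0) else (0, b ⟨i.1 - n, by omega⟩)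

@[simp] theorem doubledFamily_left (k : Fin n) : doubledFamily b ⟨k, by omega⟩ = (b k, 0) := by
  simp [doubledFamily]

@[simp] theorem doubledFamily_right (k : Fin n) :
    doubledFamily b ⟨n + k, by omega⟩ = (0, b k) := by
  simp [doubledFamily]

end Family

theorem exists_basis_doubledFamily {R M : Type*} [Semiring R] [AddCommMonoid M] [Module R M]
    {n : ℕ} (b : Module.Basis (Fin n) R M) :
    ∃ bc : Module.Basis (Fin (2 * n)) R (M × M), ∀ i, bc i = doubledFamily b i := by
  let e : Fin n ⊕ Fin n ≃ Fin (2 * n) := finSumFinEquiv.trans (finCongr (two_mul n).symm)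
  refine ⟨(b.prod b).reindex e, e.forall_congr_right.1 ?_⟩
  rintro (k | k) <;> rw [Module.Basis.reindex_apply, e.symm_apply_apply]
  · show _ = doubledFamily b ⟨k, by omega⟩
    simp
  · show _ = doubledFamily b ⟨n + k, by omega⟩
    simp

section SignedMember

variable {ι M : Type*}

def IsSignedMember [Neg M] (v : ι → M) (z : M) : Prop := ∃ i, z = v i ∨ z = -v i

theorem IsSignedMember.of_eq_or_eq_neg [InvolutiveNeg M] {v : ι → M} {z w : M}
    (h : IsSignedMember v z) (hw : w = z ∨ w = -z) : IsSignedMember v w := by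
  obtain ⟨i, hz⟩ := h
  refine ⟨i, ?_⟩
  rcases hz with rfl | rfl <;> rcases hw with rfl | rfl <;> simp

variable [NegZeroClass M] {n : ℕ} {b : Fin n → M} {z : M}

theorem IsSignedMember.doubledFamily_left (h : IsSignedMember b z) :
    IsSignedMember (doubledFamily b) (z, 0) := by
  obtain ⟨k, hz⟩ := h
  exact ⟨⟨k, by omega⟩, by rcases hz with rfl | rfl <;> simp⟩

theorem IsSignedMember.doubledFamily_right (h : IsSignedMember b z) :
    IsSignedMember (doubledFamily b) (0, z) := by
  obtain ⟨k, hz⟩ := h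
  exact ⟨⟨n + k, by omega⟩, by rcases hz with rfl | rfl <;> simp⟩

end SignedMember

section Properties

variable {D G : Type*} [NonAssocRing D] [FunLike G D D] [AddMonoidHomClass G D D] {σ : G}
  {n : ℕ} {b : Fin n → D}

theorem conj_doubledFamily (hconj : ∀ k : Fin n, k.1 ≠ 0 → σ (b k) = -b k) :
    ∀ i : Fin (2 * n), i.1 ≠ 0 → conj σ (doubledFamily b i) = -doubledFamily b i := by
  refine forall_fin_two_mul.2 ⟨fun k hk => ?_, fun k _ => ?_⟩
  · simp [hconj k hk]
  · simp

theorem mul_doubledFamily_self (hsign : ∀ k, IsSignedUnit σ (b k))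
    (hsq : ∀ k : Fin n, k.1 ≠ 0 → b k * b k = -1) :
    ∀ i : Fin (2 * n), i.1 ≠ 0 → mul σ (doubledFamily b i) (doubledFamily b i) = -(1, 0) := by
  refine forall_fin_two_mul.2 ⟨fun k hk => ?_, fun k _ => ?_⟩
  · simp [hsq k hk]
  · simp [(hsign k).conj_mul_self]

theorem mul_doubledFamily_anticomm (hσ1 : σ 1 = 1) (hb0 : ∀ k : Fin n, k.1 = 0 → b k = 1)
    (hconj : ∀ k : Fin n, k.1 ≠ 0 → σ (b k) = -b k)
    (hanti : ∀ k l : Fin n, 0 < k.1 → k.1 < l.1 → b k * b l = -(b l * b k)) :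
    ∀ i j : Fin (2 * n), 0 < i.1 → i.1 < j.1 →
      mul σ (doubledFamily b i) (doubledFamily b j) =
        -mul σ (doubledFamily b j) (doubledFamily b i) := by
  refine forall₂_fin_two_mul.2
    ⟨fun k l hk hkl => ?_, fun k l hk _ => ?_, fun k l _ hkl => ?_, fun k l _ hkl => ?_⟩
  · simp [hanti k l hk hkl]
  · simp [hconj k hk.ne']
  · simp only at hkl
    omega
  · simp only [add_lt_add_iff_left, Fin.val_fin_lt] at hkl
    by_cases hk : k.1 = 0
    · simp [hb0 k hk, hσ1, hconj l (by omega)]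
    · simp [hconj k hk, hconj l (by omega), hanti k l (by omega) hkl]

theorem isSignedMember_mul_doubledFamily (hsign : ∀ k, IsSignedUnit σ (b k))
    (hmul : ∀ k l, IsSignedMember b (b k * b l)) :
    ∀ i j : Fin (2 * n),
      IsSignedMember (doubledFamily b) (mul σ (doubledFamily b i) (doubledFamily b j)) := by
  refine forall₂_fin_two_mul.2 ⟨fun k l => ?_, fun k l => ?_, fun k l => ?_, fun k l => ?_⟩
  · simpa using (hmul k l).doubledFamily_left
  · simpa using (hmul l k).doubledFamily_right
  · simp only [doubledFamily_left, doubledFamily_right, mul_zero_mk_mk_zero]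
    refine ((hmul k l).of_eq_or_eq_neg ?_).doubledFamily_right
    rcases (hsign l).conj_eq_or with h | h <;> simp [h]
  · simp only [doubledFamily_right, mul_zero_mk_zero_mk]
    refine ((hmul l k).of_eq_or_eq_neg ?_).doubledFamily_left
    rcases (hsign l).conj_eq_or with h | h <;> simp [h]

theorem conj_conj_doubledFamily (hsign : ∀ k, IsSignedUnit σ (b k)) :
    ∀ i : Fin (2 * n), conj σ (conj σ (doubledFamily b i)) = doubledFamily b i :=
  forall_fin_two_mul.2 ⟨fun k => by simp [(hsign k).conj_conj], fun k => by simp⟩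

variable (hsign : ∀ k, IsSignedUnit σ (b k))
  (hconj_mul : ∀ k l, σ (b k * b l) = σ (b l) * σ (b k))
include hsign hconj_mul

theorem conj_mul_doubledFamily :
    ∀ i j : Fin (2 * n), conj σ (mul σ (doubledFamily b i) (doubledFamily b j)) =
      mul σ (conj σ (doubledFamily b j)) (conj σ (doubledFamily b i)) := by
  refine forall₂_fin_two_mul.2 ⟨fun k l => ?_, fun k l => ?_, fun k l => ?_, fun k l => ?_⟩
  · simpa using hconj_mul k l
  · simp [(hsign k).conj_conj]
  · simp
  · simpa using (hsign l).conj_conj_mul (hconj_mul l k)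

variable (hleft : ∀ k l, b k * (b k * b l) = (b k * b k) * b l)
  (hright : ∀ k l, b k * (b l * b l) = (b k * b l) * b l)
include hleft hright

theorem mul_doubledFamily_left_alternative :
    ∀ i j : Fin (2 * n),
      mul σ (doubledFamily b i) (mul σ (doubledFamily b i) (doubledFamily b j)) =
        mul σ (mul σ (doubledFamily b i) (doubledFamily b i)) (doubledFamily b j) := by
  refine forall₂_fin_two_mul.2 ⟨fun k l => ?_, fun k l => ?_, fun k l => ?_, fun k l => ?_⟩
  · simpa using hleft k l
  · simpa using (hright l k).symm
  · simp [(hsign l).conj_mul_conj (hconj_mul k l), (hsign k).conj_mul_self,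
      (hsign k).mul_conj_mul_cancel_right (hright l k)]
  · simp [(hsign l).conj_conj_mul (hconj_mul l k), (hsign k).conj_mul_self,
      (hsign k).mul_conj_mul_cancel (hleft k l)]

theorem mul_doubledFamily_right_alternative :
    ∀ i j : Fin (2 * n),
      mul σ (doubledFamily b i) (mul σ (doubledFamily b j) (doubledFamily b j)) =
        mul σ (mul σ (doubledFamily b i) (doubledFamily b j)) (doubledFamily b j) := by
  refine forall₂_fin_two_mul.2 ⟨fun k l => ?_, fun k l => ?_, fun k l => ?_, fun k l => ?_⟩
  · simpa using hright k l
  · simp [(hsign l).conj_mul_self, (hsign l).conj_mul_mul_cancel (hleft l k)]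
  · rcases (hsign l).conj_eq_or with h | h <;> simp [hconj_mul l l, h, hright k l]
  · simp only [doubledFamily_right, mul_zero_mk_zero_mk, mul_zero_mk_mk_zero, mul_mk_zero_zero_mk,
      map_neg, (hsign l).conj_conj_mul (hconj_mul l l)]
    simp [(hsign l).conj_mul_self, (hsign l).mul_conj_mul_cancel (hleft l k)]

theorem mul_doubledFamily_flexible (hflex : ∀ k l, (b k * b l) * b k = b k * (b l * b k)) :
    ∀ i j : Fin (2 * n),
      mul σ (mul σ (doubledFamily b i) (doubledFamily b j)) (doubledFamily b i) =
        mul σ (doubledFamily b i) (mul σ (doubledFamily b j) (doubledFamily b i)) := by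
  refine forall₂_fin_two_mul.2 ⟨fun k l => ?_, fun k l => ?_, fun k l => ?_, fun k l => ?_⟩
  · simpa using hflex k l
  · simpa using (hsign k).mul_mul_conj_comm
  · rcases (hsign l).conj_eq_or with h | h <;>
      simp [hconj_mul k l, h, (hsign k).conj_mul_mul_cancel (hleft k l),
        (hsign k).mul_conj_mul_cancel_right (hright l k)]
  · simp [(hsign k).conj_conj_mul (hconj_mul k l)]

end Properties

end CayleyDickson

open CayleyDickson

/-- Lemma on systematic bases in the standard Cayley–Dickson process: if a basis
`d = b` of the algebra `D` satisfies properties (i)–(vii), then the family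
`c i = (d i, 0)`, `c (i+n) = (0, d i)` is a basis of the standard doubling
`C = D ⊕ D` satisfying the analogous properties (with `2n` in place of `n`).
Here conjugation is defined from the quadratic form by `conj(x) = ⟨x,1⟩·1 - x`,
the doubled multiplication is `(x,y)(u,v) = (xu - conj(v)y, vx + y·conj(u))`
(i.e. `λ = -1`), and `N_C((x,y)) = N_D(x) + N_D(y)`. -/
theorem stmt19 {F D : Type} [Field F] [NonAssocRing D] [Module F D]
    (N : QuadraticForm F D)
    (conjD : D → D)
    (hconjD : ∀ x : D, conjD x = (N (x + 1) - N x - N 1) • (1 : D) - x)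
    (NC : D × D → F)
    (hNC : ∀ p : D × D, NC p = N p.1 + N p.2)
    (mC : D × D → D × D → D × D)
    (hmC : ∀ p q : D × D,
        mC p q = (p.1 * q.1 - conjD q.2 * p.2, q.2 * p.1 + p.2 * conjD q.1))
    (conjC : D × D → D × D)
    (hconjC : ∀ p : D × D,
        conjC p = (NC (p + ((1 : D), (0 : D))) - NC p - NC ((1 : D), (0 : D)))
            • (((1 : D), (0 : D)) : D × D) - p)
    (n : ℕ) (hn : 0 < n)
    (b : Module.Basis (Fin n) F D)
    (h1 : b ⟨0, hn⟩ = 1)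
    (h2 : ∀ i : Fin n, i.1 ≠ 0 → conjD (b i) = -(b i))
    (h3 : ∀ i j : Fin n, ∃ k : Fin n, b i * b j = b k ∨ b i * b j = -(b k))
    (h4 : ∀ i : Fin n, i.1 ≠ 0 → b i * b i = -1)
    (h5 : ∀ i j : Fin n, 0 < i.1 → i.1 < j.1 → b i * b j = -(b j * b i))
    (h6 : ∀ i j : Fin n, conjD (b i * b j) = conjD (b j) * conjD (b i) ∧
        conjD (conjD (b i)) = b i)
    (h7 : ∀ i j : Fin n,
        b i * (b i * b j) = (b i * b i) * b j ∧
        b i * (b j * b j) = (b i * b j) * b j ∧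
        (b i * b j) * b i = b i * (b j * b i))
    (c : Fin (2 * n) → D × D)
    (hc : ∀ i : Fin (2 * n),
        c i = if h : i.1 < n then ((b ⟨i.1, h⟩, 0) : D × D)
          else ((0, b ⟨i.1 - n, by have := i.isLt; omega⟩) : D × D)) :
    (∃ bc : Module.Basis (Fin (2 * n)) F (D × D), ∀ i, bc i = c i) ∧
    c ⟨0, by omega⟩ = ((1 : D), (0 : D)) ∧
    (∀ i : Fin (2 * n), i.1 ≠ 0 → conjC (c i) = -(c i)) ∧
    (∀ i j : Fin (2 * n), ∃ k : Fin (2 * n),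
        mC (c i) (c j) = c k ∨ mC (c i) (c j) = -(c k)) ∧
    (∀ i : Fin (2 * n), i.1 ≠ 0 → mC (c i) (c i) = -(((1 : D), (0 : D)) : D × D)) ∧
    (∀ i j : Fin (2 * n), 0 < i.1 → i.1 < j.1 →
        mC (c i) (c j) = -(mC (c j) (c i))) ∧
    (∀ i j : Fin (2 * n),
        conjC (mC (c i) (c j)) = mC (conjC (c j)) (conjC (c i)) ∧
        conjC (conjC (c i)) = c i) ∧
    (∀ i j : Fin (2 * n),
        mC (c i) (mC (c i) (c j)) = mC (mC (c i) (c i)) (c j) ∧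
        mC (c i) (mC (c j) (c j)) = mC (mC (c i) (c j)) (c j) ∧
        mC (mC (c i) (c j)) (c i) = mC (c i) (mC (c j) (c i))) := by
  have hD : (1 : D) ≠ 0 := h1 ▸ b.ne_zero ⟨0, hn⟩
  obtain rfl : conjD = normConj N := funext hconjD
  obtain rfl : conjC = conj (normConj N) :=
    funext fun p => (hconjC p).trans (doubledNorm_conj_eq N hNC p)
  obtain rfl : mC = mul (normConj N) := funext fun p => funext (hmC p)
  obtain rfl : c = doubledFamily b := funext hc
  have hσ1 : normConj N 1 = 1 := by
    obtain ⟨hmul, hinv⟩ := h6 ⟨0, hn⟩ ⟨0, hn⟩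
    rw [h1] at hmul hinv
    exact normConj_one N hD hmul hinv
  have hb0 : ∀ k : Fin n, k.1 = 0 → b k = 1 := fun k hk => (congrArg b (Fin.ext hk)).trans h1
  have hsign : ∀ k, IsSignedUnit (normConj N) (b k) := fun k => by
    by_cases hk : k.1 = 0
    · exact .inl ⟨by rw [hb0 k hk, hσ1], by rw [hb0 k hk, one_mul]⟩
    · exact .inr ⟨h2 k hk, h4 k hk⟩
  have hconj_mul := fun k l => (h6 k l).1
  have hleft := fun k l => (h7 k l).1
  have hright := fun k l => (h7 k l).2.1
  exact ⟨exists_basis_doubledFamily b, (doubledFamily_left b ⟨0, hn⟩).trans (by rw [h1]),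
    conj_doubledFamily h2, isSignedMember_mul_doubledFamily hsign h3,
    mul_doubledFamily_self hsign h4, mul_doubledFamily_anticomm hσ1 hb0 h2 h5,
    fun i j => ⟨conj_mul_doubledFamily hsign hconj_mul i j, conj_conj_doubledFamily hsign i⟩,
    fun i j => ⟨mul_doubledFamily_left_alternative hsign hconj_mul hleft hright i j,
      mul_doubledFamily_right_alternative hsign hconj_mul hleft hright i j,
      mul_doubledFamily_flexible hsign hconj_mul hleft hright (fun k l => (h7 k l).2.2) i j⟩⟩
end
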